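/- arXiv:1712.05636 — 8 statements merged into one kernel-verified Lean document; each statement's English description precedes it below -/
import Mathlib

section
/- For every n ≥ 1 and every domino tiling T of the Aztec diamond AD_n the following hold: (a) for each k ∈ ℤ, the number of West dominoes of T in row k equals the number of East dominoes of T in row k; (b) for each j ∈ ℤ, the number of North dominoes of T in column j equals the number of South dominoes of T in column j. -/
/-- The Aztec diamond of size `n`: the set of unit squares `S(j,k)` (encoded by their
lower-left corner `(j,k) ∈ ℤ²`) with `|2j+1| + |2k+1| ≤ 2n`. -/
def AztecDiamond (n : ℕ) : Set (ℤ × ℤ) :=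
  {p | |2 * p.1 + 1| + |2 * p.2 + 1| ≤ 2 * (n : ℤ)}

/-- A domino is encoded as `(j, k, horiz)`.  If `horiz = true` it is the horizontal
domino `{S(j,k), S(j+1,k)}` (lying in column `j`); if `horiz = false` it is the vertical
domino `{S(j,k), S(j,k+1)}` (lying in row `k`). -/
def dominoCells (d : ℤ × ℤ × Bool) : Set (ℤ × ℤ) :=
  if d.2.2 then {(d.1, d.2.1), (d.1 + 1, d.2.1)}
  else {(d.1, d.2.1), (d.1, d.2.1 + 1)}

/-- `T` is a domino tiling of the Aztec diamond of size `n`: the dominoes of `T` lie in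
`AD_n`, have pairwise disjoint sets of squares, and cover `AD_n`. -/
def IsDominoTiling (n : ℕ) (T : Set (ℤ × ℤ × Bool)) : Prop :=
  (∀ d ∈ T, dominoCells d ⊆ AztecDiamond n) ∧
  (∀ d ∈ T, ∀ d' ∈ T, d ≠ d' → Disjoint (dominoCells d) (dominoCells d')) ∧
  (∀ p ∈ AztecDiamond n, ∃ d ∈ T, p ∈ dominoCells d)


lemma ad_finite (n : ℕ) : (AztecDiamond n).Finite := by
  apply Set.Finite.subset (Set.finite_Icc ((-(n:ℤ), -(n:ℤ))) ((n:ℤ), (n:ℤ)))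
  rintro ⟨j, k⟩ h
  simp only [AztecDiamond, Set.mem_setOf_eq] at h
  have h1 := le_abs_self (2*j+1)
  have h2 := neg_abs_le (2*j+1)
  have h3 := le_abs_self (2*k+1)
  have h4 := neg_abs_le (2*k+1)
  simp only [Set.mem_Icc, Prod.mk_le_mk]
  omega

lemma base_mem_cells (d : ℤ × ℤ × Bool) : (d.1, d.2.1) ∈ dominoCells d := by
  rcases d with ⟨j, k, b⟩
  cases b <;> simp [dominoCells]

lemma tiling_finite {n : ℕ} {T : Set (ℤ × ℤ × Bool)} (hT : IsDominoTiling n T) :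
    T.Finite := by
  apply Set.Finite.of_finite_image (f := fun d => (d.1, d.2.1))
  · apply Set.Finite.subset (ad_finite n)
    rintro p ⟨d, hd, rfl⟩
    exact hT.1 d hd (base_mem_cells d)
  · intro d hd d' hd' he
    by_contra hne
    have hdisj := hT.2.1 d hd d' hd' hne
    have h1 : (d.1, d.2.1) ∈ dominoCells d' := by
      have : (d.1, d.2.1) = (d'.1, d'.2.1) := he
      rw [this]; exact base_mem_cells d'
    exact (Set.disjoint_left.mp hdisj (base_mem_cells d)) h1

/-- Finset version of domino cells. -/
def cellsF (d : ℤ × ℤ × Bool) : Finset (ℤ × ℤ) :=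
  if d.2.2 then {(d.1, d.2.1), (d.1 + 1, d.2.1)}
  else {(d.1, d.2.1), (d.1, d.2.1 + 1)}

lemma coe_cellsF (d : ℤ × ℤ × Bool) : (cellsF d : Set (ℤ × ℤ)) = dominoCells d := by
  rcases d with ⟨j, k, b⟩
  cases b <;> simp [cellsF, dominoCells]

/-- The signed contribution of a domino's cells in row `l`. -/
lemma contrib (l : ℤ) (d : ℤ × ℤ × Bool) :
    ∑ p ∈ (cellsF d).filter (fun p => p.2 = l),
        (if (p.1 + p.2) % 2 = 0 then (1:ℤ) else -1) =
      (if d.2.2 = false ∧ (d.1 + d.2.1) % 2 = 0 ∧ d.2.1 = l then (1:ℤ) else 0)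
      - (if d.2.2 = false ∧ (d.1 + d.2.1) % 2 = 1 ∧ d.2.1 = l then (1:ℤ) else 0)
      - (if d.2.2 = false ∧ (d.1 + d.2.1) % 2 = 0 ∧ d.2.1 = l - 1 then (1:ℤ) else 0)
      + (if d.2.2 = false ∧ (d.1 + d.2.1) % 2 = 1 ∧ d.2.1 = l - 1 then (1:ℤ) else 0) := by
  rcases d with ⟨j, m, b⟩
  cases b
  · rw [show cellsF (j, m, false) = {((j:ℤ), m), (j, m+1)} from rfl,
      Finset.sum_filter, Finset.sum_pair (by simp)]
    dsimp only
    simp only [eq_self_iff_true, true_and]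
    split_ifs <;> omega
  · rw [show cellsF (j, m, true) = {((j:ℤ), m), (j+1, m)} from rfl,
      Finset.sum_filter, Finset.sum_pair (by simp)]
    dsimp only
    simp only [Bool.true_eq_false, false_and, if_false]
    split_ifs <;> omega

/-- Part (a) as a standalone lemma. -/
lemma rowBalance {n : ℕ} {T : Set (ℤ × ℤ × Bool)} (hT : IsDominoTiling n T) (k : ℤ) :
    {d ∈ T | d.2.2 = false ∧ Even (d.1 + d.2.1) ∧ d.2.1 = k}.ncard =
    {d ∈ T | d.2.2 = false ∧ ¬ Even (d.1 + d.2.1) ∧ d.2.1 = k}.ncard := by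
  have hfin := tiling_finite hT
  set Tf := hfin.toFinset with hTf
  have hmemTf : ∀ d, d ∈ Tf ↔ d ∈ T := fun d => hfin.mem_toFinset
  have hadf := ad_finite n
  set ADf := hadf.toFinset with hADf
  set F : ℤ → ℤ := fun l =>
    ((Tf.filter (fun d => d.2.2 = false ∧ (d.1 + d.2.1) % 2 = 0 ∧ d.2.1 = l)).card : ℤ)
    - ((Tf.filter (fun d => d.2.2 = false ∧ (d.1 + d.2.1) % 2 = 1 ∧ d.2.1 = l)).card : ℤ)
    with hF
  -- row sums vanish
  have hrow0 : ∀ l : ℤ, ∑ p ∈ ADf.filter (fun p => p.2 = l),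
      (if (p.1 + p.2) % 2 = 0 then (1:ℤ) else -1) = 0 := by
    intro l
    apply Finset.sum_involution (fun p _ => ((-1 - p.1 : ℤ), p.2))
    · rintro ⟨j, m⟩ hp
      dsimp only
      split_ifs <;> omega
    · rintro ⟨j, m⟩ hp _
      simp only [ne_eq, Prod.mk.injEq, not_and]
      intro h; omega
    · rintro ⟨j, m⟩ hp
      simp only [Finset.mem_filter, Set.Finite.mem_toFinset, AztecDiamond,
        Set.mem_setOf_eq, hADf] at hp ⊢
      have habs : |2 * (-1 - j) + 1| = |2 * j + 1| := by
        rw [show 2 * (-1 - j) + 1 = -(2 * j + 1) by ring, abs_neg]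
      exact ⟨by rw [habs]; exact hp.1, hp.2⟩
    · rintro ⟨j, m⟩ hp
      simp only [Prod.mk.injEq]
      exact ⟨by omega, trivial⟩
  -- decompose a row over the tiling
  have hdecomp : ∀ l : ℤ,
      ADf.filter (fun p => p.2 = l) =
        Tf.biUnion (fun d => (cellsF d).filter (fun p => p.2 = l)) := by
    intro l
    ext p
    simp only [Finset.mem_filter, Finset.mem_biUnion, Set.Finite.mem_toFinset, hADf, hTf]
    constructor
    · rintro ⟨hpAD, hpl⟩
      obtain ⟨d, hdT, hpd⟩ := hT.2.2 p hpAD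
      refine ⟨d, hdT, ?_, hpl⟩
      rw [← Finset.mem_coe, coe_cellsF]; exact hpd
    · rintro ⟨d, hdT, hpd, hpl⟩
      refine ⟨hT.1 d hdT ?_, hpl⟩
      rw [← coe_cellsF]; exact hpd
  have hdisj : ∀ l : ℤ, (Tf : Set (ℤ × ℤ × Bool)).PairwiseDisjoint
      (fun d => (cellsF d).filter (fun p => p.2 = l)) := by
    intro l d hd d' hd' hne
    apply Finset.disjoint_filter_filter
    rw [← Finset.disjoint_coe] at *
    rw [coe_cellsF, coe_cellsF]
    exact hT.2.1 d ((hmemTf d).mp hd) d' ((hmemTf d').mp hd') hne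
  -- the step relation
  have hstep : ∀ l : ℤ, F l = F (l - 1) := by
    intro l
    have h0 := hrow0 l
    rw [hdecomp l, Finset.sum_biUnion (hdisj l)] at h0
    simp only [contrib l] at h0
    rw [Finset.sum_add_distrib, Finset.sum_sub_distrib, Finset.sum_sub_distrib,
      Finset.sum_boole, Finset.sum_boole, Finset.sum_boole, Finset.sum_boole] at h0
    simp only [hF]
    omega
  -- vanishing for l < -n
  have hvan : ∀ l : ℤ, l < -(n:ℤ) → F l = 0 := by
    intro l hl
    have hkey : ∀ r : ℤ,
        Tf.filter (fun d => d.2.2 = false ∧ (d.1 + d.2.1) % 2 = r ∧ d.2.1 = l) = ∅ := by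
      intro r
      rw [Finset.filter_eq_empty_iff]
      intro d hd hPd
      have hcell : (d.1, d.2.1) ∈ AztecDiamond n :=
        hT.1 d ((hmemTf d).mp hd) (base_mem_cells d)
      simp only [AztecDiamond, Set.mem_setOf_eq] at hcell
      have h1 := abs_nonneg (2 * d.1 + 1)
      have h2 := le_abs_self (2 * d.2.1 + 1)
      have h3 := neg_abs_le (2 * d.2.1 + 1)
      have h4 := hPd.2.2
      omega
    simp only [hF, hkey 0, hkey 1, Finset.card_empty]
    ring
  -- conclude F ≡ 0
  have hzero : ∀ l : ℤ, F l = 0 := by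
    have key : ∀ m : ℕ, F (-(n:ℤ) - 1 + m) = 0 := by
      intro m
      induction m with
      | zero => exact hvan _ (by push_cast; omega)
      | succ m ih =>
        have hs := hstep (-(n:ℤ) - 1 + (m + 1))
        rw [show (-(n:ℤ) - 1 + ((m:ℤ) + 1)) - 1 = -(n:ℤ) - 1 + m by ring] at hs
        push_cast
        push_cast at ih
        rw [hs]; exact ih
    intro l
    rcases lt_or_ge l (-(n:ℤ)) with h | h
    · exact hvan l h
    · have hl : l = -(n:ℤ) - 1 + ((l + n + 1).toNat : ℤ) := by omega
      rw [hl]; exact key _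
  -- translate to ncard
  have hsetW : {d ∈ T | d.2.2 = false ∧ Even (d.1 + d.2.1) ∧ d.2.1 = k} =
      ↑(Tf.filter (fun d => d.2.2 = false ∧ (d.1 + d.2.1) % 2 = 0 ∧ d.2.1 = k)) := by
    ext d
    simp only [Set.mem_setOf_eq, Finset.coe_filter, hmemTf, Int.even_iff]
  have hsetE : {d ∈ T | d.2.2 = false ∧ ¬ Even (d.1 + d.2.1) ∧ d.2.1 = k} =
      ↑(Tf.filter (fun d => d.2.2 = false ∧ (d.1 + d.2.1) % 2 = 1 ∧ d.2.1 = k)) := by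
    ext d
    simp only [Set.mem_setOf_eq, Finset.coe_filter, hmemTf, Int.not_even_iff]
  rw [hsetW, hsetE, Set.ncard_coe_finset, Set.ncard_coe_finset]
  have hz := hzero k
  simp only [hF] at hz
  omega

/-- The diagonal-reflection map on dominoes. -/
def dswap (d : ℤ × ℤ × Bool) : ℤ × ℤ × Bool := (d.2.1, d.1, !d.2.2)

lemma dswap_involutive : Function.Involutive dswap := by
  rintro ⟨j, k, b⟩; simp [dswap]

lemma dswap_injective : Function.Injective dswap := dswap_involutive.injective

lemma cells_dswap (d : ℤ × ℤ × Bool) :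
    dominoCells (dswap d) = Prod.swap '' dominoCells d := by
  rcases d with ⟨j, k, b⟩
  cases b <;> simp [dominoCells, dswap, Set.image_insert_eq, Prod.swap]

lemma ad_swap {n : ℕ} {p : ℤ × ℤ} (hp : p ∈ AztecDiamond n) :
    Prod.swap p ∈ AztecDiamond n := by
  rcases p with ⟨j, k⟩
  simpa [AztecDiamond, Prod.swap, add_comm] using hp

lemma tiling_dswap {n : ℕ} {T : Set (ℤ × ℤ × Bool)} (hT : IsDominoTiling n T) :
    IsDominoTiling n (dswap '' T) := by
  refine ⟨?_, ?_, ?_⟩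
  · rintro e ⟨d, hd, rfl⟩
    rw [cells_dswap]
    rintro p ⟨q, hq, rfl⟩
    exact ad_swap (hT.1 d hd hq)
  · rintro e ⟨d, hd, rfl⟩ e' ⟨d', hd', rfl⟩ hne
    rw [cells_dswap, cells_dswap]
    exact Set.disjoint_image_of_injective Prod.swap_injective
      (hT.2.1 d hd d' hd' (fun h => hne (by rw [h])))
  · intro p hp
    obtain ⟨d, hd, hpd⟩ := hT.2.2 (Prod.swap p) (ad_swap hp)
    refine ⟨dswap d, ⟨d, hd, rfl⟩, ?_⟩
    rw [cells_dswap]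
    exact ⟨Prod.swap p, hpd, Prod.swap_swap p⟩

/-- In every domino tiling of the Aztec diamond `AD_n` (`n ≥ 1`):
(a) for each `k`, the number of West dominoes (vertical, bottom square `S(j,k)` black,
i.e. `j+k` even) in row `k` equals the number of East dominoes (vertical, `j+k` odd)
in row `k`; and
(b) for each `j`, the number of North dominoes (horizontal, left square white, i.e.
`j+k` odd) in column `j` equals the number of South dominoes (horizontal, `j+k` even)
in column `j`. -/
theorem aztec_west_east_north_south_balance (n : ℕ) (hn : 1 ≤ n)
    (T : Set (ℤ × ℤ × Bool)) (hT : IsDominoTiling n T) :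
    (∀ k : ℤ,
      {d ∈ T | d.2.2 = false ∧ Even (d.1 + d.2.1) ∧ d.2.1 = k}.ncard =
      {d ∈ T | d.2.2 = false ∧ ¬ Even (d.1 + d.2.1) ∧ d.2.1 = k}.ncard) ∧
    (∀ j : ℤ,
      {d ∈ T | d.2.2 = true ∧ ¬ Even (d.1 + d.2.1) ∧ d.1 = j}.ncard =
      {d ∈ T | d.2.2 = true ∧ Even (d.1 + d.2.1) ∧ d.1 = j}.ncard) := by
  constructor
  · exact fun k => rowBalance hT k
  · intro j
    have hT' := tiling_dswap hT
    have hN : dswap '' {d ∈ T | d.2.2 = true ∧ ¬ Even (d.1 + d.2.1) ∧ d.1 = j} =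
        {e ∈ dswap '' T | e.2.2 = false ∧ ¬ Even (e.1 + e.2.1) ∧ e.2.1 = j} := by
      ext e
      constructor
      · rintro ⟨d, ⟨hdT, hb, hpar, hj⟩, rfl⟩
        exact ⟨⟨d, hdT, rfl⟩, by simp [dswap, hb], by
          simpa [dswap, add_comm] using hpar, by simp [dswap, hj]⟩
      · rintro ⟨⟨d, hdT, rfl⟩, hb, hpar, hj⟩
        refine ⟨d, ⟨hdT, ?_, ?_, ?_⟩, rfl⟩
        · simpa [dswap] using hb
        · simpa [dswap, add_comm] using hpar
        · simpa [dswap] using hj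
    have hS : dswap '' {d ∈ T | d.2.2 = true ∧ Even (d.1 + d.2.1) ∧ d.1 = j} =
        {e ∈ dswap '' T | e.2.2 = false ∧ Even (e.1 + e.2.1) ∧ e.2.1 = j} := by
      ext e
      constructor
      · rintro ⟨d, ⟨hdT, hb, hpar, hj⟩, rfl⟩
        exact ⟨⟨d, hdT, rfl⟩, by simp [dswap, hb], by
          simpa [dswap, add_comm] using hpar, by simp [dswap, hj]⟩
      · rintro ⟨⟨d, hdT, rfl⟩, hb, hpar, hj⟩
        refine ⟨d, ⟨hdT, ?_, ?_, ?_⟩, rfl⟩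
        · simpa [dswap] using hb
        · simpa [dswap, add_comm] using hpar
        · simpa [dswap] using hj
    calc {d ∈ T | d.2.2 = true ∧ ¬ Even (d.1 + d.2.1) ∧ d.1 = j}.ncard
        = (dswap '' {d ∈ T | d.2.2 = true ∧ ¬ Even (d.1 + d.2.1) ∧ d.1 = j}).ncard :=
          (Set.ncard_image_of_injective _ dswap_injective).symm
      _ = {e ∈ dswap '' T | e.2.2 = false ∧ ¬ Even (e.1 + e.2.1) ∧ e.2.1 = j}.ncard := by
          rw [hN]
      _ = {e ∈ dswap '' T | e.2.2 = false ∧ Even (e.1 + e.2.1) ∧ e.2.1 = j}.ncard :=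
          (rowBalance hT' j).symm
      _ = (dswap '' {d ∈ T | d.2.2 = true ∧ Even (d.1 + d.2.1) ∧ d.1 = j}).ncard := by
          rw [hS]
      _ = {d ∈ T | d.2.2 = true ∧ Even (d.1 + d.2.1) ∧ d.1 = j}.ncard :=
          Set.ncard_image_of_injective _ dswap_injective
end

section
/- G is invertible with G⁻¹ = 𝐐ᵗ𝐏 if and only if the matrix biorthogonality (2πi)⁻¹ ∮_γ P_j(z) W(z) Q_k(z)ᵗ dz = δ_{j,k} I_p holds for all 0 ≤ j, k ≤ N−1 (here ᵗ denotes matrix transpose without complex conjugation). -/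
open Matrix

section Helpers

open MeasureTheory Set

lemma circleIntegral_finset_sum' {ι : Type*} (s : Finset ι) (c : ℂ) (R : ℝ)
    (f : ι → ℂ → ℂ) (hf : ∀ i ∈ s, CircleIntegrable (f i) c R) :
    (∮ z in C(c, R), ∑ i ∈ s, f i z) = ∑ i ∈ s, ∮ z in C(c, R), f i z := by
  simp only [circleIntegral, smul_eq_mul, Finset.mul_sum]
  rw [intervalIntegral.integral_finset_sum]
  intro i hi
  simpa [circleIntegrable_iff] using (circleIntegrable_iff R).mp (hf i hi)

lemma circleInt_pow_div' (c : ℂ) (R : ℝ) (hR : R ≠ 0) (n : ℕ) (hn : 1 ≤ n) (g : ℂ → ℂ) :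
    (∮ z in C(c, R), g z * z ^ n / z) = ∮ z in C(c, R), g z * z ^ (n - 1) := by
  have hcount : (circleMap c R ⁻¹' {(0:ℂ)}).Countable :=
    (Set.countable_singleton _).preimage_circleMap c hR
  refine intervalIntegral.integral_congr_ae ((hcount.ae_notMem _).mono fun θ hθ _ => ?_)
  change circleMap c R θ ≠ (0:ℂ) at hθ
  congr 1
  rw [div_eq_iff hθ, mul_assoc, ← pow_succ, Nat.sub_add_cancel hn]

end Helpers

/-- The normalized matrix-valued contour integral
`(2πi)⁻¹ ∮_{|z-c|=R} f(z) dz`, taken entrywise. -/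
noncomputable def matCircleInt (p : ℕ) (c : ℂ) (R : ℝ)
    (f : ℂ → Matrix (Fin p) (Fin p) ℂ) : Matrix (Fin p) (Fin p) ℂ :=
  Matrix.of fun a b =>
    (2 * (Real.pi : ℂ) * Complex.I)⁻¹ * ∮ z in C(c, R), f z a b

/-- The `pN × pN` Gram matrix, viewed as an `N × N` block matrix with `p × p` blocks,
whose `(j,k)` block is `(2πi)⁻¹ ∮_γ W(z) z^{N+j-k} dz/z`. -/
noncomputable def gramMatrix (p N : ℕ) (c : ℂ) (R : ℝ)
    (W : ℂ → Matrix (Fin p) (Fin p) ℂ) :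
    Matrix (Fin N × Fin p) (Fin N × Fin p) ℂ :=
  Matrix.of fun x y =>
    (2 * (Real.pi : ℂ) * Complex.I)⁻¹ *
      ∮ z in C(c, R), W z x.2 y.2 * z ^ (N + (x.1 : ℕ) - (y.1 : ℕ)) / z

/-- `P_j(z) = Σ_{k=0}^{N-1} PP_{j,k} z^k`, where `PP_{j,k}` is the `(j,k)` block of `PP`. -/
noncomputable def blockPolyP (p N : ℕ)
    (PP : Matrix (Fin N × Fin p) (Fin N × Fin p) ℂ) (j : Fin N) (z : ℂ) :
    Matrix (Fin p) (Fin p) ℂ :=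
  ∑ k : Fin N, z ^ (k : ℕ) • Matrix.of fun a b => PP (j, a) (k, b)

/-- `Q_j(z) = Σ_{k=0}^{N-1} QQ_{j,k} z^{N-1-k}`. -/
noncomputable def blockPolyQ (p N : ℕ)
    (QQ : Matrix (Fin N × Fin p) (Fin N × Fin p) ℂ) (j : Fin N) (z : ℂ) :
    Matrix (Fin p) (Fin p) ℂ :=
  ∑ k : Fin N, z ^ (N - 1 - (k : ℕ)) • Matrix.of fun a b => QQ (j, a) (k, b)

lemma entry_expand (p N : ℕ) (PP QQ : Matrix (Fin N × Fin p) (Fin N × Fin p) ℂ)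
    (W : ℂ → Matrix (Fin p) (Fin p) ℂ) (j k : Fin N) (a b : Fin p) (z : ℂ) :
    (blockPolyP p N PP j z * W z * (blockPolyQ p N QQ k z)ᵀ) a b
      = ∑ x : (Fin N × Fin p) × (Fin N × Fin p),
          PP (j, a) x.2 * QQ (k, b) x.1 *
            (W z x.2.2 x.1.2 * z ^ ((x.2.1 : ℕ) + (N - 1 - (x.1.1 : ℕ)))) := by
  rw [Fintype.sum_prod_type]
  simp only [Matrix.sum_mul, Matrix.smul_mul, mul_apply, transpose_apply, blockPolyP,
    blockPolyQ, Finset.sum_apply, Matrix.sum_apply, Matrix.smul_apply, Matrix.of_apply,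
    smul_eq_mul, Finset.sum_mul, Finset.mul_sum, Fintype.sum_prod_type, pow_add]
  rw [Finset.sum_comm]
  exact Finset.sum_congr rfl fun m _ => Finset.sum_congr rfl fun t _ =>
    Finset.sum_congr rfl fun l _ => Finset.sum_congr rfl fun s _ => by ring

set_option maxHeartbeats 1000000 in
lemma key_lemma (p N : ℕ) (c : ℂ) (R : ℝ) (hR : 0 < R)
    (W : ℂ → Matrix (Fin p) (Fin p) ℂ)
    (hW : ∀ a b, ContinuousOn (fun z => W z a b) (Metric.sphere c R))
    (PP QQ : Matrix (Fin N × Fin p) (Fin N × Fin p) ℂ) (j k : Fin N) :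
    matCircleInt p c R
        (fun z => blockPolyP p N PP j z * W z * (blockPolyQ p N QQ k z)ᵀ)
      = Matrix.of fun a b => (PP * gramMatrix p N c R W * QQᵀ) (j, a) (k, b) := by
  ext a b
  set F : (Fin N × Fin p) × (Fin N × Fin p) → ℂ → ℂ := fun x z =>
    PP (j, a) x.2 * QQ (k, b) x.1 *
      (W z x.2.2 x.1.2 * z ^ ((x.2.1 : ℕ) + (N - 1 - (x.1.1 : ℕ)))) with hF
  have hint : ∀ x ∈ (Finset.univ : Finset ((Fin N × Fin p) × (Fin N × Fin p))),
      CircleIntegrable (F x) c R := fun x _ =>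
    (continuousOn_const.mul ((hW x.2.2 x.1.2).mul
      (continuous_pow _).continuousOn)).circleIntegrable hR.le
  have hfun : (fun z => (blockPolyP p N PP j z * W z * (blockPolyQ p N QQ k z)ᵀ) a b)
      = fun z => ∑ x : (Fin N × Fin p) × (Fin N × Fin p), F x z :=
    funext fun z => entry_expand p N PP QQ W j k a b z
  simp only [matCircleInt, Matrix.of_apply]
  rw [hfun, circleIntegral_finset_sum' Finset.univ c R F hint]
  have hG : ∀ u v : Fin N × Fin p, gramMatrix p N c R W v u
      = (2 * (Real.pi : ℂ) * Complex.I)⁻¹ *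
          ∮ z in C(c, R), W z v.2 u.2 * z ^ ((v.1 : ℕ) + (N - 1 - (u.1 : ℕ))) := by
    intro u v
    have hu := u.1.isLt
    simp only [gramMatrix, Matrix.of_apply]
    rw [circleInt_pow_div' c R hR.ne' (N + (v.1 : ℕ) - (u.1 : ℕ)) (by omega)]
    have he : N + (v.1 : ℕ) - (u.1 : ℕ) - 1 = (v.1 : ℕ) + (N - 1 - (u.1 : ℕ)) := by omega
    rw [he]
  simp only [hF, circleIntegral.integral_const_mul, Finset.mul_sum]
  rw [Matrix.mul_apply]
  simp only [Matrix.mul_apply, Matrix.transpose_apply, hG, Finset.sum_mul]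
  rw [Fintype.sum_prod_type]
  exact Finset.sum_congr rfl fun u _ => Finset.sum_congr rfl fun v _ => by ring

/-- `G` is invertible with `G⁻¹ = QQᵗPP` if and only if the matrix biorthogonality
`(2πi)⁻¹ ∮_γ P_j(z) W(z) Q_k(z)ᵗ dz = δ_{j,k} I_p` holds for all `0 ≤ j,k ≤ N-1`. -/
theorem gram_inverse_iff_biorthogonality
    (p N : ℕ) (hp : 1 ≤ p) (hN : 1 ≤ N) (c : ℂ) (R : ℝ) (hR : 0 < R)
    (W : ℂ → Matrix (Fin p) (Fin p) ℂ)
    (hW : ∀ a b, ContinuousOn (fun z => W z a b) (Metric.sphere c R))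
    (PP QQ : Matrix (Fin N × Fin p) (Fin N × Fin p) ℂ)
    (hPP : IsUnit PP.det) (hQQ : IsUnit QQ.det) :
    (gramMatrix p N c R W * (QQᵀ * PP) = 1 ∧
        (QQᵀ * PP) * gramMatrix p N c R W = 1) ↔
    (∀ j k : Fin N,
      matCircleInt p c R
          (fun z => blockPolyP p N PP j z * W z * (blockPolyQ p N QQ k z)ᵀ) =
        if j = k then 1 else 0) := by
  set G := gramMatrix p N c R W with hGdef
  have hQQt : IsUnit (QQᵀ).det := by rwa [Matrix.det_transpose]
  constructor
  · rintro ⟨h1, h2⟩ j k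
    have h2' : QQᵀ * (PP * G) = 1 := by rw [← Matrix.mul_assoc]; exact h2
    have hinv : (QQᵀ)⁻¹ = PP * G := Matrix.inv_eq_right_inv h2'
    have hPG : PP * G * QQᵀ = 1 := by
      rw [← hinv]; exact Matrix.nonsing_inv_mul _ hQQt
    rw [key_lemma p N c R hR W hW PP QQ j k, hPG]
    ext a b
    simp only [Matrix.of_apply, Matrix.one_apply, Prod.mk.injEq]
    by_cases hjk : j = k <;> simp [hjk, Matrix.one_apply]
  · intro h
    have hPG : PP * G * QQᵀ = 1 := by
      ext x y
      obtain ⟨j, a⟩ := x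
      obtain ⟨k, b⟩ := y
      have h' := h j k
      rw [key_lemma p N c R hR W hW PP QQ j k] at h'
      have hab := Matrix.ext_iff.mpr h' a b
      simp only [Matrix.of_apply] at hab
      rw [hab]
      by_cases hjk : j = k <;> simp [hjk, Matrix.one_apply, Prod.mk.injEq]
    have hinv : PP⁻¹ = G * QQᵀ :=
      Matrix.inv_eq_right_inv (by rw [← Matrix.mul_assoc]; exact hPG)
    have h1 : G * (QQᵀ * PP) = 1 := by
      rw [← Matrix.mul_assoc, ← hinv]; exact Matrix.nonsing_inv_mul PP hPP
    exact ⟨h1, mul_eq_one_comm.mp h1⟩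
end

section
/- If G is invertible, then there exists a unique monic matrix polynomial of degree N, P_N(z) = z^N I_p + Σ_{j=0}^{N−1} C_j z^j with C_j ∈ M_p(ℂ), such that (2πi)⁻¹ ∮_γ P_N(z) W(z) z^k dz = 0_p for every k = 0, 1, …, N−1. -/
open Matrix

namespace MVOPAux

open MeasureTheory

variable {c : ℂ} {R : ℝ}

lemma circleIntegral_add' {f g : ℂ → ℂ} (hf : CircleIntegrable f c R)
    (hg : CircleIntegrable g c R) :
    (∮ z in C(c, R), (f z + g z)) = (∮ z in C(c, R), f z) + ∮ z in C(c, R), g z := by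
  simp only [circleIntegral, smul_add, intervalIntegral.integral_add hf.out hg.out]

lemma circleIntegrable_sum {ι : Type*} (s : Finset ι) {f : ι → ℂ → ℂ}
    (h : ∀ i ∈ s, CircleIntegrable (f i) c R) :
    CircleIntegrable (fun z => ∑ i ∈ s, f i z) c R := by
  classical
  induction s using Finset.induction_on with
  | empty => simpa using circleIntegrable_const (0 : ℂ) c R
  | @insert a s ha ih =>
    simp only [Finset.sum_insert ha]
    exact (h a (Finset.mem_insert_self a s)).add
      (ih fun i hi => h i (Finset.mem_insert_of_mem hi))

lemma circleIntegral_sum {ι : Type*} (s : Finset ι) {f : ι → ℂ → ℂ}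
    (h : ∀ i ∈ s, CircleIntegrable (f i) c R) :
    (∮ z in C(c, R), ∑ i ∈ s, f i z) = ∑ i ∈ s, ∮ z in C(c, R), f i z := by
  classical
  induction s using Finset.induction_on with
  | empty => simp [circleIntegral]
  | @insert a s ha ih =>
    simp only [Finset.sum_insert ha]
    rw [circleIntegral_add' (h a (Finset.mem_insert_self a s))
        (circleIntegrable_sum s fun i hi => h i (Finset.mem_insert_of_mem hi)),
      ih fun i hi => h i (Finset.mem_insert_of_mem hi)]

lemma circleIntegral_const_mul (a : ℂ) (f : ℂ → ℂ) :
    (∮ z in C(c, R), a * f z) = a * ∮ z in C(c, R), f z := by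
  simpa [smul_eq_mul] using circleIntegral.integral_smul a f c R

lemma circleIntegrable_const_mul {f : ℂ → ℂ} (hf : CircleIntegrable f c R) (a : ℂ) :
    CircleIntegrable (fun z => a * f z) c R :=
  IntervalIntegrable.const_mul hf a

lemma circleIntegral_congr_ne (hR : R ≠ 0) {f g : ℂ → ℂ}
    (h : ∀ z, z ≠ 0 → f z = g z) :
    (∮ z in C(c, R), f z) = ∮ z in C(c, R), g z := by
  have hc : (circleMap c R ⁻¹' {(0 : ℂ)}).Countable :=
    (Set.countable_singleton _).preimage_circleMap c hR
  refine intervalIntegral.integral_congr_ae ((hc.ae_notMem _).mono fun θ hθ _ => ?_)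
  simp only [h _ hθ]

noncomputable def mom (p : ℕ) (c : ℂ) (R : ℝ) (W : ℂ → Matrix (Fin p) (Fin p) ℂ) (n : ℕ) :
    Matrix (Fin p) (Fin p) ℂ :=
  Matrix.of fun a b => (2 * (Real.pi : ℂ) * Complex.I)⁻¹ * ∮ z in C(c, R), W z a b * z ^ n

section main

variable {p N : ℕ} {W : ℂ → Matrix (Fin p) (Fin p) ℂ}

lemma intW (hR : 0 < R) (hW : ∀ a b, ContinuousOn (fun z => W z a b) (Metric.sphere c R))
    (a b : Fin p) (n : ℕ) : CircleIntegrable (fun z => W z a b * z ^ n) c R :=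
  ContinuousOn.circleIntegrable hR.le ((hW a b).mul (continuous_pow n).continuousOn)

set_option maxHeartbeats 1000000 in
lemma key (hR : 0 < R) (hW : ∀ a b, ContinuousOn (fun z => W z a b) (Metric.sphere c R))
    (C : Fin N → Matrix (Fin p) (Fin p) ℂ) (k : ℕ) :
    matCircleInt p c R (fun z => z ^ k •
        ((z ^ N • (1 : Matrix (Fin p) (Fin p) ℂ) + ∑ j : Fin N, z ^ (j : ℕ) • C j) * W z))
      = mom p c R W (N + k) + ∑ j : Fin N, C j * mom p c R W ((j : ℕ) + k) := by
  ext a b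
  have hint : ∀ z : ℂ,
      (z ^ k • ((z ^ N • (1 : Matrix (Fin p) (Fin p) ℂ)
          + ∑ j : Fin N, z ^ (j : ℕ) • C j) * W z)) a b
        = W z a b * z ^ (N + k)
          + ∑ q : Fin N × Fin p, C q.1 a q.2 * (W z q.2 b * z ^ ((q.1 : ℕ) + k)) := by
    intro z
    simp only [Matrix.smul_apply, Matrix.mul_apply, Matrix.add_apply, Matrix.sum_apply,
      Matrix.one_apply, smul_eq_mul, Fintype.sum_prod_type, mul_ite, mul_one, mul_zero,
      ite_mul, zero_mul, add_mul, Finset.sum_add_distrib, Finset.mul_sum,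
      Finset.sum_ite_eq, Finset.mem_univ, if_true]
    rw [Finset.sum_comm (s := Finset.univ) (t := Finset.univ)
      (f := fun (x : Fin N) (m : Fin p) => C x a m * (W z m b * z ^ ((x : ℕ) + k)))]
    rw [mul_add (z ^ k), Finset.mul_sum]
    congr 1
    · ring
    refine Finset.sum_congr rfl fun m _ => ?_
    rw [Finset.sum_mul, Finset.mul_sum]
    refine Finset.sum_congr rfl fun j _ => ?_
    ring
  simp only [matCircleInt, Matrix.of_apply, hint]
  have h1 := circleIntegral_add' (c := c) (R := R)
    (f := fun z => W z a b * z ^ (N + k))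
    (g := fun z => ∑ q : Fin N × Fin p, C q.1 a q.2 * (W z q.2 b * z ^ ((q.1 : ℕ) + k)))
    (intW hR hW a b (N + k))
    (circleIntegrable_sum Finset.univ fun q _ =>
      circleIntegrable_const_mul (intW hR hW q.2 b ((q.1 : ℕ) + k)) _)
  have h2 := circleIntegral_sum (c := c) (R := R) Finset.univ
    (f := fun (q : Fin N × Fin p) z => C q.1 a q.2 * (W z q.2 b * z ^ ((q.1 : ℕ) + k)))
    (fun q _ => circleIntegrable_const_mul (intW hR hW q.2 b ((q.1 : ℕ) + k)) _)
  rw [h1, h2]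
  simp only [circleIntegral_const_mul]
  simp only [mom, Matrix.add_apply, Matrix.sum_apply, Matrix.mul_apply, Matrix.of_apply]
  rw [mul_add, Finset.mul_sum]
  congr 1
  rw [Fintype.sum_prod_type]
  refine Finset.sum_congr rfl fun j _ => Finset.sum_congr rfl fun m _ => ?_
  ring

lemma gram_submatrix (hR : 0 < R) :
    (gramMatrix p N c R W).submatrix id
        (Equiv.prodCongr (Fin.revPerm : Equiv.Perm (Fin N)) (Equiv.refl (Fin p)))
      = Matrix.of fun x y => mom p c R W ((x.1 : ℕ) + (y.1 : ℕ)) x.2 y.2 := by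
  ext ⟨j, a⟩ ⟨k, b⟩
  simp only [Matrix.submatrix_apply, id_eq, Equiv.prodCongr_apply, Prod.map,
    Equiv.refl_apply, gramMatrix, Matrix.of_apply, mom]
  have hexp : N + (j : ℕ) - ((Fin.revPerm k : Fin N) : ℕ) = (j : ℕ) + (k : ℕ) + 1 := by
    have hk := k.is_lt
    simp only [Fin.revPerm_apply, Fin.val_rev]
    omega
  rw [hexp]
  congr 1
  refine circleIntegral_congr_ne hR.ne' fun z hz => ?_
  rw [pow_succ, ← mul_assoc, mul_div_cancel_right₀ _ hz]

end main

end MVOPAux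

/-- If the Gram matrix `G` is invertible, then there is a unique monic matrix
polynomial `P_N(z) = z^N I_p + Σ_{j=0}^{N-1} C_j z^j` of degree `N` such that
`(2πi)⁻¹ ∮_γ P_N(z) W(z) z^k dz = 0_p` for `k = 0, 1, …, N-1`. -/


theorem monic_MVOP_exists_unique
    (p N : ℕ) (hp : 1 ≤ p) (hN : 1 ≤ N) (c : ℂ) (R : ℝ) (hR : 0 < R)
    (W : ℂ → Matrix (Fin p) (Fin p) ℂ)
    (hW : ∀ a b, ContinuousOn (fun z => W z a b) (Metric.sphere c R))
    (hG : IsUnit (gramMatrix p N c R W).det) :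
    ∃! C : Fin N → Matrix (Fin p) (Fin p) ℂ,
      ∀ k : Fin N,
        matCircleInt p c R
            (fun z => z ^ (k : ℕ) •
              ((z ^ N • (1 : Matrix (Fin p) (Fin p) ℂ) +
                  ∑ j : Fin N, z ^ (j : ℕ) • C j) * W z)) = 0 := by
  classical
  set σ : Equiv.Perm (Fin N × Fin p) :=
    Equiv.prodCongr (Fin.revPerm : Equiv.Perm (Fin N)) (Equiv.refl (Fin p)) with hσ
  set G' : Matrix (Fin N × Fin p) (Fin N × Fin p) ℂ :=
    (gramMatrix p N c R W).submatrix id σ with hG'def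
  have hG'eq : G' = Matrix.of fun x y =>
      MVOPAux.mom p c R W ((x.1 : ℕ) + (y.1 : ℕ)) x.2 y.2 := MVOPAux.gram_submatrix hR
  have hG' : IsUnit G'.det := by
    rw [hG'def, Matrix.det_permute']
    rcases Int.units_eq_one_or (Equiv.Perm.sign σ) with h | h <;>
      simp [h, isUnit_iff_ne_zero] <;> exact hG.ne_zero
  set B : Matrix (Fin p) (Fin N × Fin p) ℂ :=
    Matrix.of fun a y => MVOPAux.mom p c R W (N + (y.1 : ℕ)) a y.2 with hB
  set XC : (Fin N → Matrix (Fin p) (Fin p) ℂ) → Matrix (Fin p) (Fin N × Fin p) ℂ :=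
    fun C => Matrix.of fun a q => C q.1 a q.2 with hXC
  have hiff : ∀ C : Fin N → Matrix (Fin p) (Fin p) ℂ,
      (∀ k : Fin N,
        matCircleInt p c R
            (fun z => z ^ (k : ℕ) •
              ((z ^ N • (1 : Matrix (Fin p) (Fin p) ℂ) +
                  ∑ j : Fin N, z ^ (j : ℕ) • C j) * W z)) = 0)
        ↔ XC C * G' = -B := by
    intro C
    have h1 : ∀ k : Fin N,
        matCircleInt p c R
            (fun z => z ^ (k : ℕ) •
              ((z ^ N • (1 : Matrix (Fin p) (Fin p) ℂ) +
                  ∑ j : Fin N, z ^ (j : ℕ) • C j) * W z))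
          = MVOPAux.mom p c R W (N + (k : ℕ))
            + ∑ j : Fin N, C j * MVOPAux.mom p c R W ((j : ℕ) + (k : ℕ)) :=
      fun k => MVOPAux.key hR hW C (k : ℕ)
    constructor
    · intro h
      ext a ⟨k, b⟩
      have h2 := h k
      rw [h1 k] at h2
      have h3 := congrFun (congrFun h2 a) b
      simp only [Matrix.add_apply, Matrix.sum_apply, Matrix.mul_apply, Matrix.zero_apply] at h3
      simp only [Matrix.mul_apply, hXC, hB, hG'eq, Matrix.of_apply, Matrix.neg_apply,
        Fintype.sum_prod_type]
      linear_combination h3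
    · intro h k
      rw [h1 k]
      ext a b
      have h3 := congrFun (congrFun h a) (k, b)
      simp only [Matrix.mul_apply, hXC, hB, hG'eq, Matrix.of_apply, Matrix.neg_apply,
        Fintype.sum_prod_type] at h3
      simp only [Matrix.add_apply, Matrix.sum_apply, Matrix.mul_apply, Matrix.zero_apply]
      linear_combination h3
  refine ⟨fun j => Matrix.of fun a m => ((-B) * G'⁻¹) a (j, m), ?_, ?_⟩
  · have hx : XC (fun j => Matrix.of fun a m => ((-B) * G'⁻¹) a (j, m)) = (-B) * G'⁻¹ := by
      ext a q; rfl
    exact (hiff _).mpr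
      (by rw [hx, Matrix.mul_assoc, Matrix.nonsing_inv_mul _ hG', Matrix.mul_one])
  · intro C hC'
    have hC := (hiff C).mp hC'
    have hXCeq : XC C = (-B) * G'⁻¹ := by
      have := congrArg (fun M => M * G'⁻¹) hC
      simpa [Matrix.mul_assoc, Matrix.mul_nonsing_inv _ hG'] using this
    funext j
    ext a m
    have := congrFun (congrFun hXCeq a) (j, m)
    exact this
end

section
/- For every w ∈ ℂ not lying on γ such that Y(w) is invertible, and for every matrix polynomial Q of degree ≤ N−1, one has the Christoffel–Darboux reproducing identity (2πi)⁻¹ ∮_γ [ (0_p I_p) · Y(w)⁻¹ · Y(z) · (I_p ; 0_p) ] · W(z) · Q(z)ᵗ · (z−w)⁻¹ dz = Q(w)ᵗ, where (0_p I_p) is the p×2p block row and (I_p ; 0_p) is the 2p×p block column; that is, (z−w)⁻¹ (0_p I_p) Y(w)⁻¹ Y(z) (I_p ; 0_p) acts as the reproducing kernel R_N(w,z) for the weight W on matrix polynomials of degree ≤ N−1. -/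
open Matrix

/-- A matrix polynomial of degree `≤ N-1` given by its coefficients:
`Q(z) = Σ_{i=0}^{N-1} C_i z^i`. -/
noncomputable def matPoly (p N : ℕ) (C : Fin N → Matrix (Fin p) (Fin p) ℂ) (z : ℂ) :
    Matrix (Fin p) (Fin p) ℂ :=
  ∑ i : Fin N, z ^ (i : ℕ) • C i

lemma CircleIntegrable.cmul {c : ℂ} {R : ℝ} {f : ℂ → ℂ} (h : CircleIntegrable f c R)
    (k : ℂ) : CircleIntegrable (fun z => k * f z) c R :=
  IntervalIntegrable.const_mul h k

lemma circleIntegral_cmul {c : ℂ} {R : ℝ} (k : ℂ) (f : ℂ → ℂ) :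
    (∮ z in C(c, R), k * f z) = k * ∮ z in C(c, R), f z := by
  simpa [smul_eq_mul] using circleIntegral.integral_smul k f c R

lemma circleIntegral_fsum {c : ℂ} {R : ℝ} {ι : Type*} (s : Finset ι) (f : ι → ℂ → ℂ)
    (h : ∀ i ∈ s, CircleIntegrable (f i) c R) :
    (∮ z in C(c, R), ∑ i ∈ s, f i z) = ∑ i ∈ s, ∮ z in C(c, R), f i z := by
  simp only [circleIntegral, Finset.smul_sum]
  exact intervalIntegral.integral_finset_sum fun i hi => (circleIntegrable_iff R).mp (h i hi)

lemma matCircleInt_congr {p : ℕ} {c : ℂ} {R : ℝ} (hR : 0 ≤ R)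
    {f g : ℂ → Matrix (Fin p) (Fin p) ℂ}
    (h : ∀ z ∈ Metric.sphere c R, f z = g z) :
    matCircleInt p c R f = matCircleInt p c R g := by
  ext a b
  simp only [matCircleInt, Matrix.of_apply]
  congr 1
  exact circleIntegral.integral_congr hR fun z hz => by rw [h z hz]

lemma matCircleInt_sum {p : ℕ} {c : ℂ} {R : ℝ} {ι : Type*} (s : Finset ι)
    (F : ι → ℂ → Matrix (Fin p) (Fin p) ℂ)
    (h : ∀ i ∈ s, ∀ a b, CircleIntegrable (fun z => F i z a b) c R) :
    matCircleInt p c R (fun z => ∑ i ∈ s, F i z) = ∑ i ∈ s, matCircleInt p c R (F i) := by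
  ext a b
  simp only [matCircleInt, Matrix.of_apply, Matrix.sum_apply]
  rw [circleIntegral_fsum s _ (fun i hi => h i hi a b), Finset.mul_sum]

lemma matCircleInt_add {p : ℕ} {c : ℂ} {R : ℝ}
    (f g : ℂ → Matrix (Fin p) (Fin p) ℂ)
    (hf : ∀ a b, CircleIntegrable (fun z => f z a b) c R)
    (hg : ∀ a b, CircleIntegrable (fun z => g z a b) c R) :
    matCircleInt p c R (fun z => f z + g z) =
      matCircleInt p c R f + matCircleInt p c R g := by
  ext a b
  simp only [matCircleInt, Matrix.of_apply, Matrix.add_apply, circleIntegral, smul_add]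
  rw [intervalIntegral.integral_add ((circleIntegrable_iff R).mp (hf a b))
    ((circleIntegrable_iff R).mp (hg a b)), mul_add]

lemma matCircleInt_smul {p : ℕ} {c : ℂ} {R : ℝ} (k : ℂ)
    (f : ℂ → Matrix (Fin p) (Fin p) ℂ) :
    matCircleInt p c R (fun z => k • f z) = k • matCircleInt p c R f := by
  ext a b
  simp only [matCircleInt, Matrix.of_apply, Matrix.smul_apply, smul_eq_mul]
  rw [circleIntegral_cmul]
  ring

lemma matCircleInt_const_mul {p : ℕ} {c : ℂ} {R : ℝ}
    (D : Matrix (Fin p) (Fin p) ℂ) (f : ℂ → Matrix (Fin p) (Fin p) ℂ)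
    (hf : ∀ a b, CircleIntegrable (fun z => f z a b) c R) :
    matCircleInt p c R (fun z => D * f z) = D * matCircleInt p c R f := by
  ext a b
  simp only [matCircleInt, Matrix.of_apply, Matrix.mul_apply]
  rw [circleIntegral_fsum Finset.univ _ (fun m _ => (hf m b).cmul (D a m)), Finset.mul_sum]
  refine Finset.sum_congr rfl fun m _ => ?_
  rw [circleIntegral_cmul]
  ring

lemma matCircleInt_mul_const {p : ℕ} {c : ℂ} {R : ℝ}
    (E : Matrix (Fin p) (Fin p) ℂ) (f : ℂ → Matrix (Fin p) (Fin p) ℂ)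
    (hf : ∀ a b, CircleIntegrable (fun z => f z a b) c R) :
    matCircleInt p c R (fun z => f z * E) = matCircleInt p c R f * E := by
  ext a b
  simp only [matCircleInt, Matrix.of_apply, Matrix.mul_apply]
  have : ∀ z, ∑ m, f z a m * E m b = ∑ m, E m b * f z a m := by
    intro z; exact Finset.sum_congr rfl fun m _ => mul_comm _ _
  simp only [this]
  rw [circleIntegral_fsum Finset.univ _ (fun m _ => (hf a m).cmul (E m b)), Finset.mul_sum]
  refine Finset.sum_congr rfl fun m _ => ?_
  rw [circleIntegral_cmul]
  ring

lemma cont_matPoly_entry {p N : ℕ} (C : Fin N → Matrix (Fin p) (Fin p) ℂ) (a b : Fin p) :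
    Continuous fun z => matPoly p N C z a b := by
  simp only [matPoly, Matrix.sum_apply, Matrix.smul_apply, smul_eq_mul]
  exact continuous_finset_sum _ fun i _ => (continuous_pow _).mul continuous_const

lemma contOn_entry_mul {p : ℕ} {S : Set ℂ} {f g : ℂ → Matrix (Fin p) (Fin p) ℂ}
    (hf : ∀ a b, ContinuousOn (fun z => f z a b) S)
    (hg : ∀ a b, ContinuousOn (fun z => g z a b) S) :
    ∀ a b, ContinuousOn (fun z => (f z * g z) a b) S := by
  intro a b
  simp only [Matrix.mul_apply]
  exact continuousOn_finset_sum _ fun m _ => (hf a m).mul (hg m b)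


set_option maxHeartbeats 1600000 in
/-- Christoffel–Darboux reproducing property of the Riemann–Hilbert kernel:
with `Y` the `2p × 2p` block matrix built from the monic MVOP `P_N` and the second-kind
polynomial `Q_{N-1}`, for every `w` off `γ` with `Y(w)` invertible and every matrix
polynomial `Q` of degree `≤ N-1`,
`(2πi)⁻¹ ∮_γ [(0 I) Y(w)⁻¹ Y(z) (I;0)] W(z) Q(z)ᵗ (z-w)⁻¹ dz = Q(w)ᵗ`. -/
theorem christoffel_darboux_RH_kernel
    (p N : ℕ) (hp : 1 ≤ p) (hN : 1 ≤ N) (c : ℂ) (R : ℝ) (hR : 0 < R)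
    (W : ℂ → Matrix (Fin p) (Fin p) ℂ)
    (hW : ∀ a b, ContinuousOn (fun z => W z a b) (Metric.sphere c R))
    (PN QN : ℂ → Matrix (Fin p) (Fin p) ℂ)
    (CP CQ : Fin N → Matrix (Fin p) (Fin p) ℂ)
    (hPN : ∀ z, PN z = z ^ N • (1 : Matrix (Fin p) (Fin p) ℂ) +
      ∑ j : Fin N, z ^ (j : ℕ) • CP j)
    (hQN : ∀ z, QN z = matPoly p N CQ z)
    (hPorth : ∀ k : Fin N,
      matCircleInt p c R (fun z => z ^ (k : ℕ) • (PN z * W z)) = 0)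
    (hQorth : ∀ k : Fin N,
      matCircleInt p c R (fun z => z ^ (k : ℕ) • (QN z * W z)) =
        if (k : ℕ) = N - 1 then -1 else 0)
    (Y : ℂ → Matrix (Fin 2 × Fin p) (Fin 2 × Fin p) ℂ)
    (hY : ∀ z, Y z = Matrix.of fun i j =>
      if i.1 = 0 then
        (if j.1 = 0 then PN z i.2 j.2
          else matCircleInt p c R (fun s => (s - z)⁻¹ • (PN s * W s)) i.2 j.2)
      else
        (if j.1 = 0 then QN z i.2 j.2
          else matCircleInt p c R (fun s => (s - z)⁻¹ • (QN s * W s)) i.2 j.2)) :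
    ∀ w : ℂ, w ∉ Metric.sphere c R → IsUnit (Y w).det →
      ∀ C : Fin N → Matrix (Fin p) (Fin p) ℂ,
        matCircleInt p c R
            (fun z => (z - w)⁻¹ •
              ((Matrix.of fun a b => ((Y w)⁻¹ * Y z) (1, a) (0, b)) * W z *
                (matPoly p N C z)ᵀ)) =
          (matPoly p N C w)ᵀ := by
  intro w hw hdet C
  set S := Metric.sphere c R with hS
  -- basic continuity facts
  have hPNc : ∀ a b, Continuous fun z => PN z a b := by
    intro a b
    have : (fun z => PN z a b) = fun z =>
        z ^ N * (1 : Matrix (Fin p) (Fin p) ℂ) a b + matPoly p N CP z a b := by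
      funext z
      rw [hPN z]
      simp [matPoly, Matrix.add_apply, Matrix.smul_apply, smul_eq_mul]
    rw [this]
    exact ((continuous_pow N).mul continuous_const).add (cont_matPoly_entry CP a b)
  have hQNc : ∀ a b, Continuous fun z => QN z a b := by
    intro a b
    have : (fun z => QN z a b) = fun z => matPoly p N CQ z a b := by
      funext z; rw [hQN z]
    rw [this]; exact cont_matPoly_entry CQ a b
  have hPWc : ∀ a b, ContinuousOn (fun z => (PN z * W z) a b) S :=
    contOn_entry_mul (fun a b => (hPNc a b).continuousOn) hW
  have hQWc : ∀ a b, ContinuousOn (fun z => (QN z * W z) a b) S :=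
    contOn_entry_mul (fun a b => (hQNc a b).continuousOn) hW
  have hzw : ∀ z ∈ S, z - w ≠ 0 := fun z hz => sub_ne_zero.2 (fun h => hw (h ▸ hz))
  have hinvc : ContinuousOn (fun z => (z - w)⁻¹) S :=
    ((continuous_id.sub continuous_const).continuousOn).inv₀ hzw
  -- integrability of φ z • (M z) given entrywise continuity
  have hCI : ∀ (φ : ℂ → ℂ), ContinuousOn φ S →
      ∀ (g : ℂ → Matrix (Fin p) (Fin p) ℂ),
        (∀ a b, ContinuousOn (fun z => g z a b) S) →
      ∀ a b, CircleIntegrable (fun z => (φ z • g z) a b) c R := by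
    intro φ hφ g hg a b
    have : (fun z => (φ z • g z) a b) = fun z => φ z * g z a b := rfl
    rw [this]
    exact (hφ.mul (hg a b)).circleIntegrable hR.le
  -- the blocks of Y(w)⁻¹ and of Y(w)
  set A : Matrix (Fin p) (Fin p) ℂ :=
    Matrix.of (fun a m => (Y w)⁻¹ (1, a) (0, m)) with hA
  set B : Matrix (Fin p) (Fin p) ℂ :=
    Matrix.of (fun a m => (Y w)⁻¹ (1, a) (1, m)) with hB
  set MP : Matrix (Fin p) (Fin p) ℂ :=
    matCircleInt p c R (fun s => (s - w)⁻¹ • (PN s * W s)) with hMP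
  set MQ : Matrix (Fin p) (Fin p) ℂ :=
    matCircleInt p c R (fun s => (s - w)⁻¹ • (QN s * W s)) with hMQ
  -- Step 1: kernel identity
  have hker : ∀ z, (Matrix.of fun a b => ((Y w)⁻¹ * Y z) (1, a) (0, b))
      = A * PN z + B * QN z := by
    intro z
    ext a b
    have hYz := hY z
    simp only [Matrix.of_apply, Matrix.mul_apply, Matrix.add_apply,
      Fintype.sum_prod_type, Fin.sum_univ_two, hYz, hA, hB]
    norm_num
  -- Step 2: (Y w)⁻¹ * Y w = 1 at block (1,1)
  have hid : A * MP + B * MQ = 1 := by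
    have h := Matrix.nonsing_inv_mul (Y w) hdet
    ext a b
    have h2 := congrFun (congrFun h (1, a)) (1, b)
    have hY01 : ∀ m b', Y w (0, m) (1, b') = MP m b' := by
      intro m b'; rw [hY w, hMP]; norm_num
    have hY11 : ∀ m b', Y w (1, m) (1, b') = MQ m b' := by
      intro m b'; rw [hY w, hMQ]; norm_num
    rw [Matrix.mul_apply] at h2
    simp only [Fintype.sum_prod_type, Fin.sum_univ_two, hY01, hY11,
      Matrix.one_apply, Prod.mk.injEq] at h2
    simp only [Matrix.add_apply, Matrix.mul_apply, hA, hB, Matrix.of_apply,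
      Matrix.one_apply]
    convert h2 using 2 <;> simp
  -- Step 3: moment identities
  have hmom : ∀ (P : ℂ → Matrix (Fin p) (Fin p) ℂ),
      (∀ a b, ContinuousOn (fun z => (P z * W z) a b) S) →
      (∀ k : Fin N, (k : ℕ) < N - 1 →
        matCircleInt p c R (fun z => z ^ (k : ℕ) • (P z * W z)) = 0) →
      ∀ i : Fin N,
        matCircleInt p c R (fun z => ((z - w)⁻¹ * z ^ (i : ℕ)) • (P z * W z)) =
          (w ^ (i : ℕ)) • matCircleInt p c R (fun s => (s - w)⁻¹ • (P s * W s)) := by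
    intro P hPc horth i
    have key : ∀ z ∈ S, ((z - w)⁻¹ * z ^ (i : ℕ)) • (P z * W z) =
        (∑ k ∈ Finset.range (i : ℕ), w ^ ((i : ℕ) - 1 - k) • (z ^ k • (P z * W z)))
          + w ^ (i : ℕ) • ((z - w)⁻¹ • (P z * W z)) := by
      intro z hz
      have hne := hzw z hz
      have hscal : (z - w)⁻¹ * z ^ (i : ℕ)
          = (∑ k ∈ Finset.range (i : ℕ), z ^ k * w ^ ((i : ℕ) - 1 - k))
            + w ^ (i : ℕ) * (z - w)⁻¹ := by
        have hinv : (z - w)⁻¹ * (z - w) = 1 := inv_mul_cancel₀ hne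
        have h1 := geom_sum₂_mul z w (i : ℕ)
        linear_combination (-(z - w)⁻¹) * h1 +
          (∑ k ∈ Finset.range (i : ℕ), z ^ k * w ^ ((i : ℕ) - 1 - k)) * hinv
      rw [hscal, add_smul, Finset.sum_smul]
      congr 1
      · exact Finset.sum_congr rfl fun k _ => by rw [mul_comm, mul_smul]
      · rw [mul_smul]
    rw [matCircleInt_congr hR.le key]
    have hsumCI : ∀ a b, CircleIntegrable (fun z =>
        (∑ k ∈ Finset.range (i : ℕ), w ^ ((i : ℕ) - 1 - k) • (z ^ k • (P z * W z))) a b) c R := by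
      intro a b
      have heq : (fun z =>
          (∑ k ∈ Finset.range (i : ℕ), w ^ ((i : ℕ) - 1 - k) • (z ^ k • (P z * W z))) a b)
          = fun z => ∑ k ∈ Finset.range (i : ℕ),
              w ^ ((i : ℕ) - 1 - k) * (z ^ k * (P z * W z) a b) := by
        funext z; simp [Matrix.sum_apply, Matrix.smul_apply, smul_eq_mul]
      rw [heq]
      refine ContinuousOn.circleIntegrable hR.le ?_
      exact continuousOn_finset_sum _ fun k _ =>
        continuousOn_const.mul ((continuous_pow k).continuousOn.mul (hPc a b))
    have htailCI : ∀ a b, CircleIntegrable (fun z =>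
        (w ^ (i : ℕ) • ((z - w)⁻¹ • (P z * W z))) a b) c R := by
      intro a b
      have heq : (fun z => (w ^ (i : ℕ) • ((z - w)⁻¹ • (P z * W z))) a b)
          = fun z => w ^ (i : ℕ) * ((z - w)⁻¹ * (P z * W z) a b) := by
        funext z; simp [Matrix.smul_apply, smul_eq_mul]
      rw [heq]
      exact (continuousOn_const.mul (hinvc.mul (hPc a b))).circleIntegrable hR.le
    rw [matCircleInt_add _ _ hsumCI htailCI, matCircleInt_sum _ _
      (fun k hk a b => by
        have heq : (fun z => (w ^ ((i : ℕ) - 1 - k) • (z ^ k • (P z * W z))) a b)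
            = fun z => w ^ ((i : ℕ) - 1 - k) * (z ^ k * (P z * W z) a b) := by
          funext z; simp [Matrix.smul_apply, smul_eq_mul]
        rw [heq]
        exact (continuousOn_const.mul
          ((continuous_pow k).continuousOn.mul (hPc a b))).circleIntegrable hR.le)]
    have h5 : ∀ k ∈ Finset.range (i : ℕ),
        matCircleInt p c R (fun z => w ^ ((i : ℕ) - 1 - k) • (z ^ k • (P z * W z))) = 0 := by
      intro k hk
      have hk1 : k < (i : ℕ) := Finset.mem_range.mp hk
      have hk2 : (i : ℕ) < N := i.isLt
      rw [matCircleInt_smul]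
      have h0 : matCircleInt p c R (fun z => z ^ k • (P z * W z)) = 0 :=
        horth ⟨k, by omega⟩ (show k < N - 1 by omega)
      rw [h0, smul_zero]
    rw [Finset.sum_eq_zero h5, matCircleInt_smul, zero_add]
  have momP : ∀ i : Fin N,
      matCircleInt p c R (fun z => ((z - w)⁻¹ * z ^ (i : ℕ)) • (PN z * W z))
        = w ^ (i : ℕ) • MP := by
    intro i
    rw [hmom PN hPWc (fun k _ => hPorth k) i, ← hMP]
  have momQ : ∀ i : Fin N,
      matCircleInt p c R (fun z => ((z - w)⁻¹ * z ^ (i : ℕ)) • (QN z * W z))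
        = w ^ (i : ℕ) • MQ := by
    intro i
    refine (hmom QN hQWc (fun k hk => ?_) i).trans (by rw [← hMQ])
    rw [hQorth k, if_neg (by omega)]
  -- Step 4: expansion of the integrand
  have ht : ∀ z : ℂ, (matPoly p N C z)ᵀ = ∑ i : Fin N, z ^ (i : ℕ) • (C i)ᵀ := by
    intro z; simp [matPoly, transpose_sum, transpose_smul]
  have expand : ∀ z : ℂ, (z - w)⁻¹ •
      ((Matrix.of fun a b => ((Y w)⁻¹ * Y z) (1, a) (0, b)) * W z * (matPoly p N C z)ᵀ)
      = ∑ i : Fin N, (((z - w)⁻¹ * z ^ (i : ℕ)) • (A * (PN z * W z) * (C i)ᵀ)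
          + ((z - w)⁻¹ * z ^ (i : ℕ)) • (B * (QN z * W z) * (C i)ᵀ)) := by
    intro z
    rw [hker z, ht z, Finset.mul_sum, Finset.smul_sum]
    refine Finset.sum_congr rfl fun i _ => ?_
    simp only [mul_smul_comm, smul_smul, add_mul, smul_add, mul_assoc]
  have hfeq : (fun z => (z - w)⁻¹ •
      ((Matrix.of fun a b => ((Y w)⁻¹ * Y z) (1, a) (0, b)) * W z * (matPoly p N C z)ᵀ))
      = fun z => ∑ i : Fin N, (((z - w)⁻¹ * z ^ (i : ℕ)) • (A * (PN z * W z) * (C i)ᵀ)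
          + ((z - w)⁻¹ * z ^ (i : ℕ)) • (B * (QN z * W z) * (C i)ᵀ)) := funext expand
  rw [hfeq]
  -- entrywise continuity of the pieces
  have hT1c : ∀ i : Fin N, ∀ a b, ContinuousOn
      (fun z => (A * (PN z * W z) * (C i)ᵀ) a b) S :=
    fun i => contOn_entry_mul
      (contOn_entry_mul (fun a b => continuousOn_const) hPWc) (fun a b => continuousOn_const)
  have hT2c : ∀ i : Fin N, ∀ a b, ContinuousOn
      (fun z => (B * (QN z * W z) * (C i)ᵀ) a b) S :=
    fun i => contOn_entry_mul
      (contOn_entry_mul (fun a b => continuousOn_const) hQWc) (fun a b => continuousOn_const)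
  have hphic : ∀ (i : Fin N), ContinuousOn (fun z => (z - w)⁻¹ * z ^ (i : ℕ)) S :=
    fun i => hinvc.mul (continuous_pow _).continuousOn
  rw [matCircleInt_sum _ _ (fun i _ a b => by
    have heq : (fun z => ((((z - w)⁻¹ * z ^ (i : ℕ)) • (A * (PN z * W z) * (C i)ᵀ))
        + (((z - w)⁻¹ * z ^ (i : ℕ)) • (B * (QN z * W z) * (C i)ᵀ))) a b)
        = fun z => ((z - w)⁻¹ * z ^ (i : ℕ)) * (A * (PN z * W z) * (C i)ᵀ) a b
          + ((z - w)⁻¹ * z ^ (i : ℕ)) * (B * (QN z * W z) * (C i)ᵀ) a b := by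
      funext z; simp [Matrix.add_apply, Matrix.smul_apply, smul_eq_mul]
    rw [heq]
    exact (((hphic i).mul (hT1c i a b)).add
      ((hphic i).mul (hT2c i a b))).circleIntegrable hR.le)]
  have hterm : ∀ i : Fin N,
      matCircleInt p c R (fun z => (((z - w)⁻¹ * z ^ (i : ℕ)) • (A * (PN z * W z) * (C i)ᵀ))
        + (((z - w)⁻¹ * z ^ (i : ℕ)) • (B * (QN z * W z) * (C i)ᵀ)))
      = w ^ (i : ℕ) • (A * MP * (C i)ᵀ) + w ^ (i : ℕ) • (B * MQ * (C i)ᵀ) := by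
    intro i
    have hCI1 : ∀ a b, CircleIntegrable
        (fun z => (((z - w)⁻¹ * z ^ (i : ℕ)) • (A * (PN z * W z) * (C i)ᵀ)) a b) c R :=
      hCI _ (hphic i) _ (hT1c i)
    have hCI2 : ∀ a b, CircleIntegrable
        (fun z => (((z - w)⁻¹ * z ^ (i : ℕ)) • (B * (QN z * W z) * (C i)ᵀ)) a b) c R :=
      hCI _ (hphic i) _ (hT2c i)
    rw [matCircleInt_add _ _ hCI1 hCI2]
    have e1 : ∀ z : ℂ, ((z - w)⁻¹ * z ^ (i : ℕ)) • (A * (PN z * W z) * (C i)ᵀ)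
        = (A * (((z - w)⁻¹ * z ^ (i : ℕ)) • (PN z * W z))) * (C i)ᵀ := by
      intro z; rw [mul_smul_comm, smul_mul_assoc]
    have e2 : ∀ z : ℂ, ((z - w)⁻¹ * z ^ (i : ℕ)) • (B * (QN z * W z) * (C i)ᵀ)
        = (B * (((z - w)⁻¹ * z ^ (i : ℕ)) • (QN z * W z))) * (C i)ᵀ := by
      intro z; rw [mul_smul_comm, smul_mul_assoc]
    have c1 : ∀ a b, CircleIntegrable
        (fun z => (A * (((z - w)⁻¹ * z ^ (i : ℕ)) • (PN z * W z))) a b) c R := by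
      intro a b
      have hfun : ∀ z : ℂ, A * (((z - w)⁻¹ * z ^ (i : ℕ)) • (PN z * W z))
          = ((z - w)⁻¹ * z ^ (i : ℕ)) • (A * (PN z * W z)) := fun z => mul_smul_comm _ _ _
      simp only [hfun]
      have hc : ∀ a b, ContinuousOn (fun z => (A * (PN z * W z)) a b) S :=
        contOn_entry_mul (f := fun _ => A) (g := fun z => PN z * W z)
          (fun a b => continuousOn_const) hPWc
      exact hCI _ (hphic i) _ hc a b
    have c2 : ∀ a b, CircleIntegrable
        (fun z => (B * (((z - w)⁻¹ * z ^ (i : ℕ)) • (QN z * W z))) a b) c R := by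
      intro a b
      have hfun : ∀ z : ℂ, B * (((z - w)⁻¹ * z ^ (i : ℕ)) • (QN z * W z))
          = ((z - w)⁻¹ * z ^ (i : ℕ)) • (B * (QN z * W z)) := fun z => mul_smul_comm _ _ _
      simp only [hfun]
      have hc : ∀ a b, ContinuousOn (fun z => (B * (QN z * W z)) a b) S :=
        contOn_entry_mul (f := fun _ => B) (g := fun z => QN z * W z)
          (fun a b => continuousOn_const) hQWc
      exact hCI _ (hphic i) _ hc a b
    have i1 : matCircleInt p c R
        (fun z => (A * (((z - w)⁻¹ * z ^ (i : ℕ)) • (PN z * W z))) * (C i)ᵀ)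
        = matCircleInt p c R
            (fun z => A * (((z - w)⁻¹ * z ^ (i : ℕ)) • (PN z * W z))) * (C i)ᵀ :=
      matCircleInt_mul_const _ _ c1
    have i2 : matCircleInt p c R
        (fun z => (B * (((z - w)⁻¹ * z ^ (i : ℕ)) • (QN z * W z))) * (C i)ᵀ)
        = matCircleInt p c R
            (fun z => B * (((z - w)⁻¹ * z ^ (i : ℕ)) • (QN z * W z))) * (C i)ᵀ :=
      matCircleInt_mul_const _ _ c2
    have i1' : matCircleInt p c R
        (fun z => A * (((z - w)⁻¹ * z ^ (i : ℕ)) • (PN z * W z)))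
        = A * matCircleInt p c R (fun z => ((z - w)⁻¹ * z ^ (i : ℕ)) • (PN z * W z)) :=
      matCircleInt_const_mul _ _ (hCI _ (hphic i) _ hPWc)
    have i2' : matCircleInt p c R
        (fun z => B * (((z - w)⁻¹ * z ^ (i : ℕ)) • (QN z * W z)))
        = B * matCircleInt p c R (fun z => ((z - w)⁻¹ * z ^ (i : ℕ)) • (QN z * W z)) :=
      matCircleInt_const_mul _ _ (hCI _ (hphic i) _ hQWc)
    simp only [e1, e2]
    rw [i1, i2, i1', i2', momP i, momQ i]
    simp only [mul_smul_comm, smul_mul_assoc]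
  rw [Finset.sum_congr rfl (fun i _ => hterm i)]
  have final : ∑ i : Fin N,
      (w ^ (i : ℕ) • (A * MP * (C i)ᵀ) + w ^ (i : ℕ) • (B * MQ * (C i)ᵀ))
      = (matPoly p N C w)ᵀ := by
    rw [ht w]
    refine Finset.sum_congr rfl fun i _ => ?_
    rw [← smul_add, ← add_mul, hid, one_mul]
  exact final
end

section
/- Let k ≥ 1 and j be integers with 0 ≤ j ≤ k−1, let a, b ∈ ℤ, and let γ be a positively oriented circle in ℂ passing through neither 1 nor −1. Then ∮_γ f^{(k)}(z) · z^j dz = 0, where f(z) = (z−1)^{k+a}(z+1)^{k+b} (integer, possibly negative, powers) and f^{(k)} denotes the k-th derivative of f on ℂ ∖ {1, −1}. Equivalently, the Jacobi polynomial with (possibly negative) integer parameters defined by the Rodrigues formula P_k^{(a,b)}(z) = (2^k k!)⁻¹ (z−1)^{−a}(z+1)^{−b} f^{(k)}(z) satisfies the non-Hermitian contour orthogonality ∮_γ P_k^{(a,b)}(z) (z−1)^a (z+1)^b z^j dz = 0 for 0 ≤ j ≤ k−1. -/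
/-!
Since the circle avoids `±1`, `f` is analytic near it, and integrating by parts `k` times
moves all derivatives of `f^{(k)}` onto `z ^ j`, whose `k`-th derivative vanishes for `j < k`;
no boundary terms appear because the circle is closed. The second identity is the first one,
since `(z-1)^{-a}(z+1)^{-b}` cancels `(z-1)^a(z+1)^b` on the circle.
-/

open Metric

namespace circleIntegral

variable {f g : ℂ → ℂ} {c : ℂ} {R : ℝ}

theorem integral_deriv_mul_eq_neg_integral_mul_deriv (hR : 0 ≤ R)
    (hf : AnalyticOnNhd ℂ f (sphere c R)) (hg : AnalyticOnNhd ℂ g (sphere c R)) :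
    (∮ z in C(c, R), deriv f z * g z) = -∮ z in C(c, R), f z * deriv g z := by
  have hf' := hf.deriv
  have hg' := hg.deriv
  have hprod : (∮ z in C(c, R), (deriv f z * g z + f z * deriv g z)) = 0 :=
    integral_eq_zero_of_hasDerivWithinAt hR fun z hz =>
      ((hf z hz).differentiableAt.hasDerivAt.mul
        (hg z hz).differentiableAt.hasDerivAt).hasDerivWithinAt
  have hint_left : CircleIntegrable (fun z => deriv f z * g z) c R :=
    (hf'.continuousOn.mul hg.continuousOn).circleIntegrable hR
  have hint_right : CircleIntegrable (fun z => f z * deriv g z) c R :=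
    (hf.continuousOn.mul hg'.continuousOn).circleIntegrable hR
  rw [integral_add hint_left hint_right] at hprod
  exact eq_neg_of_add_eq_zero_left hprod

theorem integral_iteratedDeriv_mul_pow_eq_zero (hR : 0 ≤ R)
    (hf : AnalyticOnNhd ℂ f (sphere c R)) {j k : ℕ} (hjk : j < k) :
    (∮ z in C(c, R), iteratedDeriv k f z * z ^ j) = 0 := by
  induction k generalizing j with
  | zero => exact absurd hjk j.not_lt_zero
  | succ m ih =>
    have hpow : AnalyticOnNhd ℂ (fun z : ℂ => z ^ j) (sphere c R) := fun z _ =>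
      analyticAt_id.pow j
    calc (∮ z in C(c, R), iteratedDeriv (m + 1) f z * z ^ j)
        = -∮ z in C(c, R), iteratedDeriv m f z * deriv (fun z : ℂ => z ^ j) z := by
          rw [iteratedDeriv_succ, iteratedDeriv_eq_iterate]
          exact integral_deriv_mul_eq_neg_integral_mul_deriv hR (hf.iterated_deriv m) hpow
      _ = -(j * ∮ z in C(c, R), iteratedDeriv m f z * z ^ (j - 1)) := by
          simp only [deriv_pow_field, ← integral_const_mul]
          congr 2 with z
          ring
      _ = 0 := by
          rcases j with _ | i
          · simp
          · rw [ih (by omega), mul_zero, neg_zero]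

end circleIntegral

theorem analyticOnNhd_sub_one_zpow_mul_add_one_zpow (m n : ℤ) :
    AnalyticOnNhd ℂ (fun w : ℂ => (w - 1) ^ m * (w + 1) ^ n) {1, -1}ᶜ := by
  intro z hz
  simp only [Set.mem_compl_iff, Set.mem_insert_iff, Set.mem_singleton_iff, not_or] at hz
  have hz1 : z - 1 ≠ 0 := sub_ne_zero.2 hz.1
  have hz2 : z + 1 ≠ 0 := by
    rw [← sub_neg_eq_add]
    exact sub_ne_zero.2 hz.2
  exact ((analyticAt_id.sub analyticAt_const).zpow hz1).mul
    ((analyticAt_id.add analyticAt_const).zpow hz2)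

theorem jacobi_contour_orthogonality_general (k : ℕ) (j : ℕ) (hj : j < k)
    (a b : ℤ) (c : ℂ) (R : ℝ) (hR : 0 < R)
    (h1 : (1 : ℂ) ∉ Metric.sphere c R) (hm1 : (-1 : ℂ) ∉ Metric.sphere c R) :
    ((∮ z in C(c, R),
        iteratedDeriv k
            (fun w : ℂ => (w - 1) ^ ((k : ℤ) + a) * (w + 1) ^ ((k : ℤ) + b)) z *
          z ^ j) = 0) ∧
    ((∮ z in C(c, R),
        (((2 : ℂ) ^ k * (Nat.factorial k : ℂ))⁻¹ * (z - 1) ^ (-a) * (z + 1) ^ (-b) *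
            iteratedDeriv k
              (fun w : ℂ => (w - 1) ^ ((k : ℤ) + a) * (w + 1) ^ ((k : ℤ) + b)) z) *
          ((z - 1) ^ a * (z + 1) ^ b * z ^ j)) = 0) := by
  set f : ℂ → ℂ := fun w => (w - 1) ^ ((k : ℤ) + a) * (w + 1) ^ ((k : ℤ) + b)
  have hsphere : sphere c R ⊆ {1, -1}ᶜ := by
    rintro z hz (rfl | rfl)
    exacts [h1 hz, hm1 hz]
  have horth : (∮ z in C(c, R), iteratedDeriv k f z * z ^ j) = 0 :=
    circleIntegral.integral_iteratedDeriv_mul_pow_eq_zero hR.le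
      ((analyticOnNhd_sub_one_zpow_mul_add_one_zpow _ _).mono hsphere) hj
  refine ⟨horth, ?_⟩
  have hweight : ∀ z ∈ sphere c R,
      (z - 1) ^ (-a) * (z + 1) ^ (-b) * ((z - 1) ^ a * (z + 1) ^ b) = 1 := by
    intro z hz
    have hz := hsphere hz
    simp only [Set.mem_compl_iff, Set.mem_insert_iff, not_or, Set.mem_singleton_iff] at hz
    rw [mul_mul_mul_comm, ← zpow_add₀ (by grind), ← zpow_add₀ (by grind)]
    simp
  rw [circleIntegral.integral_congr hR.le (g := fun z =>
      ((2 : ℂ) ^ k * (Nat.factorial k : ℂ))⁻¹ * (iteratedDeriv k f z * z ^ j)),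
    circleIntegral.integral_const_mul, horth, mul_zero]
  intro z hz
  linear_combination (((2 : ℂ) ^ k * (Nat.factorial k : ℂ))⁻¹ * iteratedDeriv k f z * z ^ j) *
    hweight z hz

/-- Non-Hermitian contour orthogonality of Jacobi polynomials with integer (possibly
negative) parameters, via the Rodrigues formula.  Let `f(z) = (z-1)^{k+a} (z+1)^{k+b}`
(integer powers) and let `f^{(k)}` be its `k`-th derivative.  For every circle `γ`
passing through neither `1` nor `-1`, and every `0 ≤ j ≤ k-1`:
`∮_γ f^{(k)}(z) z^j dz = 0`, and equivalently, with
`P_k^{(a,b)}(z) = (2^k k!)⁻¹ (z-1)^{-a} (z+1)^{-b} f^{(k)}(z)`,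
`∮_γ P_k^{(a,b)}(z) (z-1)^a (z+1)^b z^j dz = 0`. -/
theorem jacobi_contour_orthogonality (k : ℕ) (hk : 1 ≤ k) (j : ℕ) (hj : j < k)
    (a b : ℤ) (c : ℂ) (R : ℝ) (hR : 0 < R)
    (h1 : (1 : ℂ) ∉ Metric.sphere c R) (hm1 : (-1 : ℂ) ∉ Metric.sphere c R) :
    ((∮ z in C(c, R),
        iteratedDeriv k
            (fun w : ℂ => (w - 1) ^ ((k : ℤ) + a) * (w + 1) ^ ((k : ℤ) + b)) z *
          z ^ j) = 0) ∧
    ((∮ z in C(c, R),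
        (((2 : ℂ) ^ k * (Nat.factorial k : ℂ))⁻¹ * (z - 1) ^ (-a) * (z + 1) ^ (-b) *
            iteratedDeriv k
              (fun w : ℂ => (w - 1) ^ ((k : ℤ) + a) * (w + 1) ^ ((k : ℤ) + b)) z) *
          ((z - 1) ^ a * (z + 1) ^ b * z ^ j)) = 0) :=
  jacobi_contour_orthogonality_general k j hj a b c R hR h1 hm1
end

section
/- (i) For every real x with x > 0 and x ≠ 1, one has x(x+α²)(x+β²) > 0 and, with s the positive real square root of x(x+α²)(x+β²): ((α+β)x + s)²/(x(x−1)²) > 1 > ((α+β)x − s)²/(x(x−1)²) > 0. (ii) For every real x with −α² < x < −β², one has x(x+α²)(x+β²) > 0 and, with s its positive real square root: ((α+β)x − s)²/(x(x−1)²) < −1 < ((α+β)x + s)²/(x(x−1)²) < 0. -/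
/-- Real-line behaviour of the eigenvalues `λ_{1,2}(x) = ((α+β)x ± s)²/(x(x-1)²)`
of `W(x)`, where `s = √(x(x+α²)(x+β²))`:
(i) for `x > 0`, `x ≠ 1`: `x(x+α²)(x+β²) > 0` and `λ₁ > 1 > λ₂ > 0`;
(ii) for `-α² < x < -β²`: `x(x+α²)(x+β²) > 0` and `λ₁ < -1 < λ₂ < 0`
(with the roles of `±` as stated). -/
theorem lambda_real_line_inequalities (α β : ℝ) (hα : 1 < α) (hαβ : α * β = 1) :
    (∀ x : ℝ, 0 < x → x ≠ 1 →
      0 < x * (x + α ^ 2) * (x + β ^ 2) ∧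
      (let s := Real.sqrt (x * (x + α ^ 2) * (x + β ^ 2));
        1 < ((α + β) * x + s) ^ 2 / (x * (x - 1) ^ 2) ∧
        ((α + β) * x - s) ^ 2 / (x * (x - 1) ^ 2) < 1 ∧
        0 < ((α + β) * x - s) ^ 2 / (x * (x - 1) ^ 2))) ∧
    (∀ x : ℝ, -α ^ 2 < x → x < -β ^ 2 →
      0 < x * (x + α ^ 2) * (x + β ^ 2) ∧
      (let s := Real.sqrt (x * (x + α ^ 2) * (x + β ^ 2));
        ((α + β) * x - s) ^ 2 / (x * (x - 1) ^ 2) < -1 ∧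
        -1 < ((α + β) * x + s) ^ 2 / (x * (x - 1) ^ 2) ∧
        ((α + β) * x + s) ^ 2 / (x * (x - 1) ^ 2) < 0)) := by
  have hα0 : 0 < α := by linarith
  have hβ0 : 0 < β := by nlinarith
  have hab : 0 < α + β := by linarith
  constructor
  · intro x hx hx1
    have hxa : 0 < x + α ^ 2 := by nlinarith
    have hxb : 0 < x + β ^ 2 := by nlinarith
    have ht : 0 < x * (x + α ^ 2) * (x + β ^ 2) := by positivity
    refine ⟨ht, ?_⟩
    set s := Real.sqrt (x * (x + α ^ 2) * (x + β ^ 2)) with hsdef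
    have hs0 : 0 < s := Real.sqrt_pos.mpr ht
    have hs2 : s ^ 2 = x * (x + α ^ 2) * (x + β ^ 2) := Real.sq_sqrt ht.le
    have hx1' : x - 1 ≠ 0 := sub_ne_zero.mpr hx1
    have hD : 0 < x * (x - 1) ^ 2 := mul_pos hx (by positivity)
    have hiden : s ^ 2 = ((α + β) * x) ^ 2 + x * (x - 1) ^ 2 := by
      rw [hs2]; linear_combination ((α * β + 1) * x - 2 * x ^ 2) * hαβ
    have hp : 0 < (α + β) * x := mul_pos hab hx
    have hps : (α + β) * x < s := by nlinarith
    refine ⟨?_, ?_, ?_⟩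
    · rw [lt_div_iff₀ hD]
      nlinarith [mul_pos hp hs0]
    · rw [div_lt_one hD]
      nlinarith [mul_pos hp (sub_pos.mpr hps)]
    · exact div_pos (by nlinarith) hD
  · intro x hxa' hxb'
    have hxb0 : 0 < β ^ 2 := by positivity
    have hx0 : x < 0 := by linarith
    have hxa : 0 < x + α ^ 2 := by linarith
    have hxb : x + β ^ 2 < 0 := by linarith
    have ht : 0 < x * (x + α ^ 2) * (x + β ^ 2) :=
      mul_pos_of_neg_of_neg (mul_neg_of_neg_of_pos hx0 hxa) hxb
    refine ⟨ht, ?_⟩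
    set s := Real.sqrt (x * (x + α ^ 2) * (x + β ^ 2)) with hsdef
    have hs0 : 0 < s := Real.sqrt_pos.mpr ht
    have hs2 : s ^ 2 = x * (x + α ^ 2) * (x + β ^ 2) := Real.sq_sqrt ht.le
    have hD : x * (x - 1) ^ 2 < 0 := mul_neg_of_neg_of_pos hx0 (by nlinarith)
    have hiden : s ^ 2 = ((α + β) * x) ^ 2 + x * (x - 1) ^ 2 := by
      rw [hs2]; linear_combination ((α * β + 1) * x - 2 * x ^ 2) * hαβ
    have hp : (α + β) * x < 0 := mul_neg_of_pos_of_neg hab hx0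
    have hps : s < -((α + β) * x) := by nlinarith
    refine ⟨?_, ?_, ?_⟩
    · rw [div_lt_iff_of_neg hD]
      nlinarith [mul_pos hs0 (show 0 < s - (α + β) * x by linarith)]
    · rw [lt_div_iff_of_neg hD]
      nlinarith [mul_neg_of_pos_of_neg hs0 (show s + (α + β) * x < 0 by linarith)]
    · exact div_neg_of_pos_of_neg (by nlinarith) hD
end

section
/- Let z ∈ ℂ with z ∉ {0, −α², −β²}, and let y ∈ ℂ satisfy y² = z(z+α²)(z+β²) (so y ≠ 0). Then |(α+β)z + y| = |(α+β)z − y| holds if and only if z is real and z ∈ (−∞, −α²) ∪ (−β², 0). Consequently: for every z ∈ ℂ ∖ ((−∞,−α²] ∪ [−β²,0]) with z ≠ 1, the two eigenvalues of W(z) have distinct absolute values; while for every real x ∈ (−∞,−α²) ∪ (−β², 0), both eigenvalues of W(x) have absolute value 1. -/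
/-!
For real `a > 0`, `‖a z + y‖ = ‖a z - y‖` exactly when `u = z ȳ` is purely imaginary, i.e. when
`u²` is a negative real. Since `αβ = 1`, `z (z + α²) (z + β²) = z (z² + c z + 1)` with
`c = α² + β² > 2`, and then `u² = |z|² · z · conj (z² + c z + 1) = |z|² (c |z|² + z + |z|² z̄)`.
Its imaginary part `|z|² (1 - |z|²) Im z` vanishes only on the real axis and on the unit circle,
where the real part is `c + 2 Re z ≥ c - 2 > 0`. On the real axis the condition reads
`x (x + α²) (x + β²) < 0`.

The eigenvalue numerators satisfy `((α+β) z + y) ((α+β) z - y) = -z (z - 1)²`, so equal moduli of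
the numerators put both eigenvalues on the unit circle.
-/

open Complex ComplexConjugate

namespace Complex

theorem norm_add_eq_norm_sub_iff_re_mul_conj_eq_zero (a b : ℂ) :
    ‖a + b‖ = ‖a - b‖ ↔ (a * conj b).re = 0 := by
  rw [← sq_eq_sq₀ (norm_nonneg _) (norm_nonneg _), Complex.sq_norm, Complex.sq_norm,
    normSq_add, normSq_sub]
  constructor <;> intro h <;> linarith

theorem re_eq_zero_iff_sq_im_eq_zero_and_sq_re_neg {u : ℂ} (hu : u ≠ 0) :
    u.re = 0 ↔ (u ^ 2).im = 0 ∧ (u ^ 2).re < 0 := by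
  have hpos : 0 < u.re ^ 2 + u.im ^ 2 := by simpa [normSq_apply, sq] using normSq_pos.mpr hu
  simp only [sq, mul_re, mul_im]
  constructor
  · intro h
    simp only [h]
    constructor <;> nlinarith
  · rintro ⟨him, hre⟩
    rcases mul_eq_zero.1 (by linarith : u.re * u.im = 0) with h | h
    · exact h
    · nlinarith

section Cubic

variable (c : ℝ) (z : ℂ)

theorem re_mul_conj_cubic :
    (z * conj (z ^ 2 + c * z + 1)).re = c * normSq z + (1 + normSq z) * z.re := by
  simp only [normSq_apply, sq, mul_re, mul_im, map_add, map_mul, map_one, conj_re, conj_im,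
    add_re, add_im, ofReal_re, ofReal_im, one_re, one_im, conj_ofReal]
  ring

theorem im_mul_conj_cubic : (z * conj (z ^ 2 + c * z + 1)).im = (1 - normSq z) * z.im := by
  simp only [normSq_apply, sq, mul_re, mul_im, map_add, map_mul, map_one, conj_re, conj_im,
    add_re, add_im, ofReal_re, ofReal_im, one_re, one_im, conj_ofReal]
  ring

theorem im_eq_zero_and_re_neg_mul_conj_cubic_iff (hc : 2 < c) :
    ((z * conj (z ^ 2 + c * z + 1)).im = 0 ∧ (z * conj (z ^ 2 + c * z + 1)).re < 0) ↔
      ∃ x : ℝ, z = x ∧ x * (x ^ 2 + c * x + 1) < 0 := by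
  rw [re_mul_conj_cubic, im_mul_conj_cubic]
  constructor
  · rintro ⟨him, hre⟩
    have hreal : z.im = 0 := by
      by_contra hz
      have hN : normSq z = 1 := by
        linarith [(mul_eq_zero.1 him).resolve_right hz]
      have hre1 : -1 ≤ z.re := by
        rw [normSq_apply] at hN
        nlinarith [sq_nonneg z.im]
      rw [hN] at hre
      linarith
    refine ⟨z.re, ext rfl hreal, ?_⟩
    rw [normSq_apply, hreal] at hre
    linarith
  · rintro ⟨x, rfl, hx⟩
    rw [normSq_ofReal, ofReal_re, ofReal_im]
    constructor
    · ring
    · linarith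

theorem sq_mul_conj_of_sq_eq_cubic {y : ℂ} (hy : y ^ 2 = z * (z ^ 2 + c * z + 1)) :
    (z * conj y) ^ 2 = normSq z * (z * conj (z ^ 2 + c * z + 1)) := by
  rw [mul_pow, ← map_pow, hy, map_mul, ← mul_conj]
  ring

theorem norm_add_eq_norm_sub_iff_of_sq_eq_cubic {a : ℝ} (ha : 0 < a) (hc : 2 < c) {y : ℂ}
    (hy : y ^ 2 = z * (z ^ 2 + c * z + 1)) (hy0 : y ≠ 0) :
    ‖a * z + y‖ = ‖a * z - y‖ ↔ ∃ x : ℝ, z = x ∧ x * (x ^ 2 + c * x + 1) < 0 := by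
  have hz : z ≠ 0 := by
    rintro rfl
    exact hy0 (pow_eq_zero_iff two_ne_zero |>.1 (by simpa using hy))
  have hN : 0 < normSq z := normSq_pos.mpr hz
  rw [norm_add_eq_norm_sub_iff_re_mul_conj_eq_zero, mul_assoc, re_ofReal_mul,
    mul_eq_zero, or_iff_right ha.ne',
    re_eq_zero_iff_sq_im_eq_zero_and_sq_re_neg (mul_ne_zero hz ((map_ne_zero _).2 hy0)),
    sq_mul_conj_of_sq_eq_cubic c z hy, re_ofReal_mul, im_ofReal_mul, mul_eq_zero,
    or_iff_right hN.ne', ← im_eq_zero_and_re_neg_mul_conj_cubic_iff c z hc]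
  exact and_congr_right fun _ => ⟨(neg_of_mul_neg_right · hN.le), mul_neg_of_pos_of_neg hN⟩

end Cubic

end Complex

theorem mul_add_mul_add_neg_iff {K : Type*} [Field K] [LinearOrder K] [IsStrictOrderedRing K]
    {s t x : K} (hs : 0 < s) (hst : s < t) :
    x * (x + t) * (x + s) < 0 ↔ x < -t ∨ (-s < x ∧ x < 0) := by
  constructor
  · intro h
    by_contra! hx
    rcases le_or_gt x (-s) with hxs | hxs
    · have : 0 ≤ -x * -(x + s) := mul_nonneg (by linarith) (by linarith)
      nlinarith [mul_nonneg (by linarith : 0 ≤ x + t) this]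
    · have : 0 ≤ x * (x + t) := mul_nonneg (hx.2 hxs) (by linarith)
      nlinarith [mul_nonneg this (by linarith : 0 ≤ x + s)]
  · rintro (hx | ⟨hsx, hx⟩)
    · nlinarith [mul_pos (by linarith : 0 < -(x + t)) (by linarith : 0 < -(x + s))]
    · nlinarith [mul_pos (by linarith : 0 < x + t) (by linarith : 0 < x + s)]

section Eigenvalues

variable {α β : ℝ}

theorem cubic_eq_of_mul_eq_one {R : Type*} [CommRing R] {a b : R} (hab : a * b = 1) (z : R) :
    z * (z + a ^ 2) * (z + b ^ 2) = z * (z ^ 2 + (a ^ 2 + b ^ 2) * z + 1) := by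
  linear_combination z * (a * b + 1) * hab

theorem norm_add_eq_norm_sub_iff_mem_cuts (hα : 1 < α) (hαβ : α * β = 1) {z y : ℂ}
    (hy : y ^ 2 = z * (z + (α : ℂ) ^ 2) * (z + (β : ℂ) ^ 2)) (hy0 : y ≠ 0) :
    ‖((α : ℂ) + (β : ℂ)) * z + y‖ = ‖((α : ℂ) + (β : ℂ)) * z - y‖ ↔
      ∃ x : ℝ, z = (x : ℂ) ∧ (x < -α ^ 2 ∨ (-β ^ 2 < x ∧ x < 0)) := by
  have hβ : 0 < β := by nlinarith
  have hβα : β ^ 2 < α ^ 2 := by nlinarith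
  have hc : 2 < α ^ 2 + β ^ 2 := by nlinarith
  rw [cubic_eq_of_mul_eq_one (by exact_mod_cast hαβ)] at hy
  have key := norm_add_eq_norm_sub_iff_of_sq_eq_cubic (α ^ 2 + β ^ 2) z (a := α + β)
    (by linarith) hc (by push_cast; exact hy) hy0
  push_cast at key
  rw [key]
  refine exists_congr fun x => and_congr_right fun _ => ?_
  rw [← mul_add_mul_add_neg_iff (by positivity) hβα, cubic_eq_of_mul_eq_one hαβ x]

theorem ne_zero_of_sq_eq_cubic {z y : ℂ} (h0 : z ≠ 0) (ha : z ≠ -(α : ℂ) ^ 2)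
    (hb : z ≠ -(β : ℂ) ^ 2) (hy : y ^ 2 = z * (z + (α : ℂ) ^ 2) * (z + (β : ℂ) ^ 2)) : y ≠ 0 := by
  rintro rfl
  simp only [ne_eq, ← add_eq_zero_iff_eq_neg] at ha hb
  exact mul_ne_zero (mul_ne_zero h0 ha) hb (by simpa using hy.symm)

theorem add_mul_sub_eq_neg_mul_sub_one_sq {R : Type*} [CommRing R] {a b z y : R} (hab : a * b = 1)
    (hy : y ^ 2 = z * (z + a ^ 2) * (z + b ^ 2)) :
    ((a + b) * z + y) * ((a + b) * z - y) = -(z * (z - 1) ^ 2) := by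
  linear_combination -hy + (2 * z ^ 2 - z * (a * b + 1)) * hab

theorem norm_eq_of_norm_sq_div_eq {K : Type*} [NormedDivisionRing K] {a b d : K} (hd : d ≠ 0)
    (h : ‖a ^ 2 / d‖ = ‖b ^ 2 / d‖) : ‖a‖ = ‖b‖ := by
  rw [norm_div, norm_div, div_left_inj' (norm_ne_zero_iff.2 hd), norm_pow, norm_pow] at h
  exact (pow_left_inj₀ (norm_nonneg a) (norm_nonneg b) two_ne_zero).1 h

theorem norm_sq_div_eq_one_of_norm_eq {K : Type*} [NormedDivisionRing K] {a b d : K}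
    (hab : ‖a‖ = ‖b‖) (hd : ‖a * b‖ = ‖d‖) (hd0 : d ≠ 0) :
    ‖a ^ 2 / d‖ = 1 ∧ ‖b ^ 2 / d‖ = 1 := by
  have hb : ‖b‖ ^ 2 = ‖d‖ := by rw [sq, ← hd, norm_mul, hab]
  simp only [norm_div, norm_pow, hab, hb, div_self (norm_ne_zero_iff.2 hd0), and_self]

theorem eigenvalue_norm_ne_of_notMem_cuts (hα : 1 < α) (hαβ : α * β = 1) {z y : ℂ} (hz1 : z ≠ 1)
    (hcut : ¬∃ x : ℝ, z = (x : ℂ) ∧ (x ≤ -α ^ 2 ∨ (-β ^ 2 ≤ x ∧ x ≤ 0)))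
    (hy : y ^ 2 = z * (z + (α : ℂ) ^ 2) * (z + (β : ℂ) ^ 2)) :
    ‖(((α : ℂ) + (β : ℂ)) * z + y) ^ 2 / (z * (z - 1) ^ 2)‖ ≠
      ‖(((α : ℂ) + (β : ℂ)) * z - y) ^ 2 / (z * (z - 1) ^ 2)‖ := by
  intro heq
  have hpt (x : ℝ) (hx : x ≤ -α ^ 2 ∨ (-β ^ 2 ≤ x ∧ x ≤ 0)) : z ≠ x := fun h => hcut ⟨x, h, hx⟩
  have h0 : z ≠ 0 := by simpa using hpt 0 (Or.inr ⟨by nlinarith, le_rfl⟩)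
  have ha : z ≠ -(α : ℂ) ^ 2 := by simpa using hpt (-α ^ 2) (Or.inl le_rfl)
  have hb : z ≠ -(β : ℂ) ^ 2 := by simpa using hpt (-β ^ 2) (Or.inr ⟨le_rfl, by nlinarith⟩)
  have hd : z * (z - 1) ^ 2 ≠ 0 := mul_ne_zero h0 (pow_ne_zero 2 (sub_ne_zero.2 hz1))
  obtain ⟨x, rfl, hx⟩ := (norm_add_eq_norm_sub_iff_mem_cuts hα hαβ hy
    (ne_zero_of_sq_eq_cubic h0 ha hb hy)).1 (norm_eq_of_norm_sq_div_eq hd heq)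
  exact hcut ⟨x, rfl, hx.imp le_of_lt fun h => ⟨h.1.le, h.2.le⟩⟩

theorem eigenvalue_norm_eq_one_of_mem_cuts (hα : 1 < α) (hαβ : α * β = 1) {x : ℝ}
    (hx : x < -α ^ 2 ∨ (-β ^ 2 < x ∧ x < 0)) {y : ℂ}
    (hy : y ^ 2 = (x : ℂ) * ((x : ℂ) + (α : ℂ) ^ 2) * ((x : ℂ) + (β : ℂ) ^ 2)) :
    ‖(((α : ℂ) + (β : ℂ)) * (x : ℂ) + y) ^ 2 / ((x : ℂ) * ((x : ℂ) - 1) ^ 2)‖ = 1 ∧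
      ‖(((α : ℂ) + (β : ℂ)) * (x : ℂ) - y) ^ 2 / ((x : ℂ) * ((x : ℂ) - 1) ^ 2)‖ = 1 := by
  have hβ : 0 < β := by nlinarith
  have hp : x * (x + α ^ 2) * (x + β ^ 2) < 0 :=
    (mul_add_mul_add_neg_iff (by positivity) (by nlinarith)).2 hx
  have hx0 : x < 0 := hx.elim (fun h => by nlinarith) (·.2)
  have hy0 : y ≠ 0 := by
    rintro rfl
    exact hp.ne (by exact_mod_cast hy.symm.trans (zero_pow two_ne_zero))
  have hd : (x : ℂ) * ((x : ℂ) - 1) ^ 2 ≠ 0 := by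
    norm_cast
    exact mul_ne_zero hx0.ne (pow_ne_zero 2 (by linarith))
  refine norm_sq_div_eq_one_of_norm_eq
    ((norm_add_eq_norm_sub_iff_mem_cuts hα hαβ hy hy0).2 ⟨x, rfl, hx⟩) ?_ hd
  rw [add_mul_sub_eq_neg_mul_sub_one_sq (by exact_mod_cast hαβ) hy, norm_neg]

end Eigenvalues

/-- For `z ∉ {0, -α², -β²}` and `y² = z(z+α²)(z+β²)`, one has
`|(α+β)z + y| = |(α+β)z - y|` iff `z` is real and lies in `(-∞,-α²) ∪ (-β²,0)`.
Consequently: off the cuts (and away from `1`) the two eigenvalues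
`((α+β)z ± y)²/(z(z-1)²)` of `W(z)` have distinct absolute values, whereas for real
`x ∈ (-∞,-α²) ∪ (-β²,0)` both eigenvalues have absolute value `1`. -/
theorem eigenvalue_modulus_dichotomy (α β : ℝ) (hα : 1 < α) (hαβ : α * β = 1) :
    (∀ z y : ℂ, z ≠ 0 → z ≠ -(α : ℂ) ^ 2 → z ≠ -(β : ℂ) ^ 2 →
      y ^ 2 = z * (z + (α : ℂ) ^ 2) * (z + (β : ℂ) ^ 2) →
      (‖((α : ℂ) + (β : ℂ)) * z + y‖ =
          ‖((α : ℂ) + (β : ℂ)) * z - y‖ ↔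
        ∃ x : ℝ, z = (x : ℂ) ∧ (x < -α ^ 2 ∨ (-β ^ 2 < x ∧ x < 0)))) ∧
    (∀ z y : ℂ, z ≠ 1 →
      ¬(∃ x : ℝ, z = (x : ℂ) ∧ (x ≤ -α ^ 2 ∨ (-β ^ 2 ≤ x ∧ x ≤ 0))) →
      y ^ 2 = z * (z + (α : ℂ) ^ 2) * (z + (β : ℂ) ^ 2) →
      ‖(((α : ℂ) + (β : ℂ)) * z + y) ^ 2 / (z * (z - 1) ^ 2)‖ ≠
        ‖(((α : ℂ) + (β : ℂ)) * z - y) ^ 2 / (z * (z - 1) ^ 2)‖) ∧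
    (∀ x : ℝ, (x < -α ^ 2 ∨ (-β ^ 2 < x ∧ x < 0)) → ∀ y : ℂ,
      y ^ 2 = (x : ℂ) * ((x : ℂ) + (α : ℂ) ^ 2) * ((x : ℂ) + (β : ℂ) ^ 2) →
      ‖(((α : ℂ) + (β : ℂ)) * (x : ℂ) + y) ^ 2 /
          ((x : ℂ) * ((x : ℂ) - 1) ^ 2)‖ = 1 ∧
      ‖(((α : ℂ) + (β : ℂ)) * (x : ℂ) - y) ^ 2 /
          ((x : ℂ) * ((x : ℂ) - 1) ^ 2)‖ = 1) :=
  ⟨fun _ _ h0 ha hb hy =>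
      norm_add_eq_norm_sub_iff_mem_cuts hα hαβ hy (ne_zero_of_sq_eq_cubic h0 ha hb hy),
    fun _ _ hz1 hcut hy => eigenvalue_norm_ne_of_notMem_cuts hα hαβ hz1 hcut hy,
    fun _ hx _ hy => eigenvalue_norm_eq_one_of_mem_cuts hα hαβ hx hy⟩
end

section
/- One has 0 < ((α−β)/(2π)) · ∫₀^{β²} dt/√(t(β²−t)(α²−t)) < 1/2, where the integral is a convergent improper Riemann integral. Consequently the gas-phase particle density K_gas(m,n;m,n) = 1/2 + (−1)^{m+n} ((α−β)/(2π)) ∫₀^{β²} dt/√(t(β²−t)(α²−t)) lies strictly between 0 and 1 for all integers m, n. -/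
/-!
On `[0, β²]` the factor `α² - t` is at least `α² - β²`, so the integral is at most
`π / √(α² - β²)`, where `π = ∫₀^b dt / √(t (b - t))` (an antiderivative is `arcsin (2t/b - 1)`).
As `(α - β)² < α² - β²`, the prefactor `(α - β) / (2π)` brings this below `1/2`.
-/

open MeasureTheory Set intervalIntegral Real

lemma hasDerivAt_arcsin_two_mul_div_sub_one {b t : ℝ} (ht : t ∈ Ioo 0 b) :
    HasDerivAt (fun t => arcsin (2 * t / b - 1)) (1 / √(t * (b - t))) t := by
  obtain ⟨ht0, htb⟩ := ht
  have hb : 0 < b := ht0.trans htb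
  have hlin : HasDerivAt (fun t : ℝ => 2 * t / b - 1) (2 / b) t := by
    simpa using (((hasDerivAt_id t).const_mul 2).div_const b).sub_const 1
  have hlo : 2 * t / b - 1 ≠ -1 := by
    rw [Ne, sub_eq_neg_self]; positivity
  have hhi : 2 * t / b - 1 ≠ 1 := by
    rw [Ne, sub_eq_iff_eq_add, div_eq_iff hb.ne']; intro h; linarith
  refine ((hasDerivAt_arcsin hlo hhi).comp t hlin).congr_deriv ?_
  have hsq : 1 - (2 * t / b - 1) ^ 2 = (2 / b) ^ 2 * (t * (b - t)) := by
    field_simp; ring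
  have hpos : 0 < √(t * (b - t)) := sqrt_pos.2 (mul_pos ht0 (by linarith))
  rw [hsq, sqrt_mul (sq_nonneg _), sqrt_sq (by positivity)]
  field_simp

lemma intervalIntegrable_one_div_sqrt_mul_sub {b : ℝ} (hb : 0 < b) :
    IntervalIntegrable (fun t => 1 / √(t * (b - t))) volume 0 b := by
  refine intervalIntegrable_deriv_of_nonneg (g := fun t => arcsin (2 * t / b - 1))
    (by fun_prop) (fun t ht => ?_) (fun t _ => by positivity)
  rw [min_eq_left hb.le, max_eq_right hb.le] at ht
  exact hasDerivAt_arcsin_two_mul_div_sub_one ht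

lemma integral_one_div_sqrt_mul_sub {b : ℝ} (hb : 0 < b) :
    ∫ t in (0 : ℝ)..b, 1 / √(t * (b - t)) = π := by
  rw [integral_eq_sub_of_hasDerivAt_of_le hb.le (by fun_prop)
    (fun t ht => hasDerivAt_arcsin_two_mul_div_sub_one ht)
    (intervalIntegrable_one_div_sqrt_mul_sub hb)]
  norm_num [mul_div_assoc, div_self hb.ne']

lemma one_div_sqrt_mul_sub_mul_sub_le {b c t : ℝ} (hbc : b < c) (ht : t ∈ Icc 0 b) :
    1 / √(t * (b - t) * (c - t)) ≤ (√(c - b))⁻¹ * (1 / √(t * (b - t))) := by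
  obtain ⟨ht0, htb⟩ := ht
  rw [sqrt_mul (mul_nonneg ht0 (by linarith)), one_div, mul_inv, one_div, mul_comm]
  gcongr

lemma intervalIntegrable_one_div_sqrt_mul_sub_mul_sub {b c : ℝ} (hb : 0 < b) (hbc : b < c) :
    IntervalIntegrable (fun t => 1 / √(t * (b - t) * (c - t))) volume 0 b := by
  refine ((intervalIntegrable_one_div_sqrt_mul_sub hb).const_mul (√(c - b))⁻¹).mono_fun'
    (by fun_prop : Measurable _).aestronglyMeasurable ?_
  rw [uIoc_of_le hb.le]
  refine ae_restrict_of_forall_mem measurableSet_Ioc fun t ht => ?_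
  dsimp only
  rw [Real.norm_of_nonneg (by positivity)]
  exact one_div_sqrt_mul_sub_mul_sub_le hbc (Ioc_subset_Icc_self ht)

lemma integral_one_div_sqrt_mul_sub_mul_sub_pos {b c : ℝ} (hb : 0 < b) (hbc : b < c) :
    0 < ∫ t in (0 : ℝ)..b, 1 / √(t * (b - t) * (c - t)) :=
  intervalIntegral_pos_of_pos_on (intervalIntegrable_one_div_sqrt_mul_sub_mul_sub hb hbc)
    (fun t ⟨ht0, htb⟩ => by
      have : 0 < b - t := by linarith
      have : 0 < c - t := by linarith
      positivity) hb

lemma integral_one_div_sqrt_mul_sub_mul_sub_le {b c : ℝ} (hb : 0 < b) (hbc : b < c) :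
    ∫ t in (0 : ℝ)..b, 1 / √(t * (b - t) * (c - t)) ≤ π / √(c - b) :=
  calc ∫ t in (0 : ℝ)..b, 1 / √(t * (b - t) * (c - t))
      ≤ ∫ t in (0 : ℝ)..b, (√(c - b))⁻¹ * (1 / √(t * (b - t))) :=
        integral_mono_on hb.le (intervalIntegrable_one_div_sqrt_mul_sub_mul_sub hb hbc)
          ((intervalIntegrable_one_div_sqrt_mul_sub hb).const_mul _)
          fun t ht => one_div_sqrt_mul_sub_mul_sub_le hbc ht
    _ = π / √(c - b) := by
        rw [intervalIntegral.integral_const_mul, integral_one_div_sqrt_mul_sub hb, inv_mul_eq_div]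

lemma half_add_neg_one_zpow_mul_mem_Ioo {x : ℝ} (hx : |x| < 1 / 2) (k : ℤ) :
    1 / 2 + (-1) ^ k * x ∈ Ioo 0 1 := by
  have : |(-1 : ℝ) ^ k * x| < 1 / 2 := by rwa [abs_mul, abs_neg_one_zpow, one_mul]
  constructor <;> linarith [abs_lt.1 this]

/-- The gas-phase particle density of the two-periodic Aztec diamond:
`0 < ((α-β)/(2π)) ∫₀^{β²} dt/√(t(β²-t)(α²-t)) < 1/2` (the integral being a
convergent improper integral), so that
`K_gas(m,n;m,n) = 1/2 + (-1)^{m+n} ((α-β)/(2π)) ∫₀^{β²} dt/√(t(β²-t)(α²-t))`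
lies strictly between `0` and `1`. -/
theorem gas_density_between_zero_and_one (α β : ℝ) (hα : 1 < α) (hαβ : α * β = 1) :
    IntervalIntegrable
        (fun t : ℝ => 1 / Real.sqrt (t * (β ^ 2 - t) * (α ^ 2 - t)))
        MeasureTheory.volume 0 (β ^ 2) ∧
    0 < (α - β) / (2 * Real.pi) *
        ∫ t in (0 : ℝ)..(β ^ 2), 1 / Real.sqrt (t * (β ^ 2 - t) * (α ^ 2 - t)) ∧
    (α - β) / (2 * Real.pi) *
        (∫ t in (0 : ℝ)..(β ^ 2), 1 / Real.sqrt (t * (β ^ 2 - t) * (α ^ 2 - t))) <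
      1 / 2 ∧
    ∀ m n : ℤ,
      0 < 1 / 2 + (-1 : ℝ) ^ (m + n) * ((α - β) / (2 * Real.pi) *
          ∫ t in (0 : ℝ)..(β ^ 2), 1 / Real.sqrt (t * (β ^ 2 - t) * (α ^ 2 - t))) ∧
      1 / 2 + (-1 : ℝ) ^ (m + n) * ((α - β) / (2 * Real.pi) *
          ∫ t in (0 : ℝ)..(β ^ 2), 1 / Real.sqrt (t * (β ^ 2 - t) * (α ^ 2 - t))) <
        1 := by
  have hβ : 0 < β := pos_of_mul_pos_right (hαβ ▸ one_pos) (by linarith)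
  have hβα : β < α := by nlinarith
  have hb : 0 < β ^ 2 := by positivity
  have hbc : β ^ 2 < α ^ 2 := by gcongr
  set I := ∫ t in (0 : ℝ)..(β ^ 2), 1 / √(t * (β ^ 2 - t) * (α ^ 2 - t))
  have hcoeff : 0 < (α - β) / (2 * π) := div_pos (by linarith) (by positivity)
  have hpos : 0 < (α - β) / (2 * π) * I :=
    mul_pos hcoeff (integral_one_div_sqrt_mul_sub_mul_sub_pos hb hbc)
  have hroot : 0 < √(α ^ 2 - β ^ 2) := sqrt_pos.2 (by linarith)
  have hlt : (α - β) / (2 * π) * I < 1 / 2 :=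
    calc (α - β) / (2 * π) * I
        ≤ (α - β) / (2 * π) * (π / √(α ^ 2 - β ^ 2)) :=
          mul_le_mul_of_nonneg_left (integral_one_div_sqrt_mul_sub_mul_sub_le hb hbc) hcoeff.le
      _ = (α - β) / √(α ^ 2 - β ^ 2) / 2 := by field_simp
      _ < 1 / 2 := by
          gcongr
          exact (div_lt_one hroot).2 (lt_sqrt_of_sq_lt (by nlinarith))
  exact ⟨intervalIntegrable_one_div_sqrt_mul_sub_mul_sub hb hbc, hpos, hlt, fun m n =>
    half_add_neg_one_zpow_mul_mem_Ioo (by rwa [abs_of_pos hpos]) (m + n)⟩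
end
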